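/- arXiv:2507.06987 — 7 statements merged into one kernel-verified Lean document; each statement's English description precedes it below -/
import Mathlib

section
/- Let n ≥ 1, Σ = ℤ₂. For f_n(a_{-n},…,a_n) = a_{-n} ⊕ a_0 and g_n(a_{-n},…,a_n) = a_{-n+1} ⊕ ⋯ ⊕ a_n, and any θ ∈ {f_n, g_n}^ℤ containing the pattern g_n (f_n)^n and at most one block of n consecutive f_n's, the global rule H_θ is pre-injective but not surjective. Hence there exists a one-dimensional NUCA violating Moore's direction of the Garden of Eden theorem while being pre-injective. -/
/-- Global update rule of the NUCA over ℤ with state set ℤ₂ whose local rule at cell `y`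
is `f_n(a₋ₙ,…,aₙ) = a₋ₙ ⊕ a₀` when `θ y = true` and
`g_n(a₋ₙ,…,aₙ) = a₋ₙ₊₁ ⊕ ⋯ ⊕ aₙ` when `θ y = false`. -/
noncomputable def fgRule (n : ℕ) (θ : ℤ → Bool) (e : ℤ → ZMod 2) (y : ℤ) : ZMod 2 :=
  if θ y then e (y - n) + e y
  else ∑ i ∈ Finset.Icc (1 - (n : ℤ)) (n : ℤ), e (y + i)

/-- Pre-injectivity: any two distinct configurations that differ in only finitely
many cells have distinct images. -/
def PreInjective {G S : Type} (H : (G → S) → (G → S)) : Prop :=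
  ∀ c e : G → S, {x : G | c x ≠ e x}.Finite → H c = H e → c = e

lemma shiftSum (d : ℤ → ZMod 2) (z : ℤ) (n : ℕ) :
    ∑ i ∈ Finset.Ioc (0:ℤ) (n:ℤ), d (z + i - (n:ℤ)) = ∑ i ∈ Finset.Ioc (-(n:ℤ)) 0, d (z + i) := by
  have h : Finset.Ioc (-(n:ℤ)) 0 = (Finset.Ioc (0:ℤ) (n:ℤ)).map (addRightEmbedding (-(n:ℤ))) := by
    rw [Finset.map_add_right_Ioc]; norm_num
  rw [h, Finset.sum_map]
  apply Finset.sum_congr rfl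
  intro i _
  simp [addRightEmbedding]
  ring_nf

lemma sumWindow (n : ℕ) (e : ℤ → ZMod 2) (z : ℤ) :
    ∑ i ∈ Finset.Ioc (0:ℤ) (n:ℤ), (e (z + i - (n:ℤ)) + e (z + i)) =
      ∑ i ∈ Finset.Icc (1 - (n:ℤ)) (n:ℤ), e (z + i) := by
  have hIcc : Finset.Icc (1 - (n:ℤ)) (n:ℤ) = Finset.Ioc (-(n:ℤ)) (n:ℤ) := by
    ext t; simp only [Finset.mem_Icc, Finset.mem_Ioc]; omega
  have hun : Finset.Ioc (-(n:ℤ)) 0 ∪ Finset.Ioc (0:ℤ) (n:ℤ) = Finset.Ioc (-(n:ℤ)) (n:ℤ) :=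
    Finset.Ioc_union_Ioc_eq_Ioc (by omega) (by omega)
  have hdisj : Disjoint (Finset.Ioc (-(n:ℤ)) 0) (Finset.Ioc (0:ℤ) (n:ℤ)) := by
    rw [Finset.disjoint_left]
    intro a ha hb
    rw [Finset.mem_Ioc] at ha hb
    omega
  rw [hIcc, Finset.sum_add_distrib, shiftSum, ← hun, Finset.sum_union hdisj]

lemma char2_cancel {a b : ZMod 2} (h : a + b = 0) : b = a := by
  linear_combination h - CharTwo.add_self_eq_zero a

lemma shiftZero (d : ℤ → ZMod 2) (hfin : {t : ℤ | d t ≠ 0}.Finite) (s : ℤ) (hs : s ≠ 0) (y : ℤ)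
    (h : ∀ k : ℕ, d (y + ((k:ℤ)+1)*s) = d (y + (k:ℤ)*s)) : d y = 0 := by
  have hconst : ∀ k : ℕ, d (y + (k:ℤ)*s) = d y := by
    intro k
    induction k with
    | zero => simp
    | succ m ih =>
      have hm := h m
      have harg : ((m+1 : ℕ) : ℤ) = (m : ℤ) + 1 := by push_cast; ring
      rw [harg, hm, ih]
  by_contra hy
  have hinj : Function.Injective (fun k : ℕ => y + (k:ℤ)*s) := by
    intro a b hab
    simp only at hab
    have : (a:ℤ) * s = (b:ℤ) * s := by linarith
    have := mul_right_cancel₀ hs this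
    exact_mod_cast this
  have hmem : ∀ k : ℕ, (fun k : ℕ => y + (k:ℤ)*s) k ∈ {t : ℤ | d t ≠ 0} := by
    intro k
    simp only [Set.mem_setOf_eq]
    rw [hconst k]
    exact hy
  exact (Set.infinite_of_injective_forall_mem hinj hmem) hfin

/-- any `θ` containing the pattern `g_n (f_n)^n` and having at most one
block of `n` consecutive `f_n`'s yields a global rule that is pre-injective but not
surjective: a 1D NUCA violating Moore's direction of the Garden of Eden theorem. -/
theorem stmt_12 (n : ℕ) (hn : 1 ≤ n) (θ : ℤ → Bool) (x : ℤ)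
    (hg : θ x = false) (hf : ∀ i : ℤ, 1 ≤ i → i ≤ n → θ (x + i) = true)
    (hone : ∀ x y : ℤ, (∀ i : ℤ, 0 ≤ i → i < n → θ (x + i) = true) →
      (∀ i : ℤ, 0 ≤ i → i < n → θ (y + i) = true) → x = y) :
    PreInjective (fgRule n θ) ∧ ¬ Function.Surjective (fgRule n θ) := by
  constructor
  · -- Pre-injectivity
    intro c e hfin hHeq
    set d : ℤ → ZMod 2 := fun y => c y - e y with hd
    have hfind : {y : ℤ | d y ≠ 0}.Finite := by
      have : {y : ℤ | d y ≠ 0} = {y : ℤ | c y ≠ e y} := by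
        ext t; simp [hd, sub_ne_zero]
      rw [this]; exact hfin
    -- local relations for d
    have hT : ∀ y : ℤ, θ y = true → d (y - n) + d y = 0 := by
      intro y hy
      have h := congrFun hHeq y
      simp only [fgRule, hy, if_true] at h
      simp only [hd]
      linear_combination h
    have hF : ∀ y : ℤ, θ y = false →
        ∑ i ∈ Finset.Icc (1 - (n:ℤ)) (n:ℤ), d (y + i) = 0 := by
      intro y hy
      have h := congrFun hHeq y
      simp only [fgRule, hy, Bool.false_eq_true, if_false] at h
      simp only [hd]
      rw [Finset.sum_sub_distrib, h, sub_self]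
    set D : ℤ → ZMod 2 := fun t => d (t - n) + d t with hD
    have hDtrue : ∀ y : ℤ, θ y = true → D y = 0 := fun y hy => hT y hy
    have hDwin : ∀ z : ℤ, θ z = false → ∑ i ∈ Finset.Ioc (0:ℤ) (n:ℤ), D (z + i) = 0 := by
      intro z hz
      have : ∑ i ∈ Finset.Ioc (0:ℤ) (n:ℤ), D (z + i)
          = ∑ i ∈ Finset.Ioc (0:ℤ) (n:ℤ), (d (z + i - (n:ℤ)) + d (z + i)) := by
        apply Finset.sum_congr rfl
        intro i _
        simp only [hD]
      rw [this, sumWindow]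
      exact hF z hz
    have hDfin : {t : ℤ | D t ≠ 0}.Finite := by
      apply Set.Finite.subset (hfind.union (hfind.image (fun t => t + (n:ℤ))))
      intro t ht
      simp only [Set.mem_setOf_eq, hD] at ht
      by_contra hcon
      simp only [Set.mem_union, Set.mem_setOf_eq, Set.mem_image, not_or, not_exists,
        not_and] at hcon
      obtain ⟨h1, h2⟩ := hcon
      have h3 := h2 (t - n)
      by_cases hdt : d t = 0
      · by_cases hdtn : d (t - (n:ℤ)) = 0
        · rw [hdt, hdtn] at ht; simp at ht
        · exact (h3 hdtn) (by ring)
      · exact h1 hdt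
    -- Lemma A: an element of supp D whose n right-neighbours are clear must be x+n+1
    have hA : ∀ w : ℤ, D w ≠ 0 → (∀ t : ℤ, w < t → t < w + n → D t = 0) → w = x + n + 1 := by
      intro w hw hnb
      set F := (Finset.Icc (w - n - 1) (w - 1)).filter (fun t => θ t = false) with hFdef
      have hFne : F.Nonempty := by
        by_contra hcon
        rw [Finset.not_nonempty_iff_eq_empty, Finset.filter_eq_empty_iff] at hcon
        have hall : ∀ t : ℤ, w - n - 1 ≤ t → t ≤ w - 1 → θ t = true := by
          intro t h1 h2
          have := hcon (Finset.mem_Icc.mpr ⟨h1, h2⟩)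
          simpa using this
        have h1 := hone (w - n - 1) (w - n)
          (fun i hi hi' => hall _ (by omega) (by omega))
          (fun i hi hi' => hall _ (by omega) (by omega))
        omega
      set z := F.max' hFne with hz
      have hzmem : z ∈ F := F.max'_mem hFne
      rw [hFdef, Finset.mem_filter, Finset.mem_Icc] at hzmem
      obtain ⟨⟨hz1, hz2⟩, hzfalse⟩ := hzmem
      have hzmax : ∀ t : ℤ, z < t → t ≤ w - 1 → θ t = true := by
        intro t h1 h2
        by_contra hcon
        have htF : t ∈ F := by
          rw [hFdef, Finset.mem_filter, Finset.mem_Icc]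
          exact ⟨⟨by omega, h2⟩, by simpa using hcon⟩
        have := F.le_max' t htF
        omega
      by_cases hcase : w - n ≤ z
      · -- window at z isolates D w, contradiction
        exfalso
        have h0 := hDwin z hzfalse
        have hmem : w - z ∈ Finset.Ioc (0:ℤ) (n:ℤ) := Finset.mem_Ioc.mpr ⟨by omega, by omega⟩
        rw [Finset.sum_eq_single_of_mem (w - z) hmem ?_] at h0
        · rw [show z + (w - z) = w by ring] at h0
          exact hw h0
        · intro i hi hne
          rw [Finset.mem_Ioc] at hi
          rcases lt_trichotomy (z + i) w with hlt | heq | hgt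
          · exact hDtrue (z + i) (hzmax (z + i) (by omega) (by omega))
          · omega
          · exact hnb (z + i) hgt (by omega)
      · -- z = w - n - 1 : full block of n trues, must be the unique one
        have hzeq : z = w - n - 1 := by omega
        have := hone (w - n) (x + 1)
          (fun i hi hi' => hzmax (w - n + i) (by omega) (by omega))
          (fun i hi hi' => by
            have := hf (1 + i) (by omega) (by omega)
            rwa [show x + (1 + i) = x + 1 + i by ring] at this)
        omega
    -- D vanishes everywhere
    have hDzero : ∀ t : ℤ, D t = 0 := by
      by_contra hcon
      push_neg at hcon
      obtain ⟨t0, ht0⟩ := hcon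
      set S := hDfin.toFinset with hS
      have hSne : S.Nonempty := ⟨t0, by simp [hS, Set.Finite.mem_toFinset]; exact ht0⟩
      set w := S.max' hSne with hw
      have hwmem : D w ≠ 0 := by
        have := S.max'_mem hSne
        simpa [hS, Set.Finite.mem_toFinset] using this
      have hwmax : ∀ t : ℤ, D t ≠ 0 → t ≤ w := by
        intro t ht
        exact S.le_max' t (by simp [hS, Set.Finite.mem_toFinset]; exact ht)
      have hweq : w = x + n + 1 := hA w hwmem (by
        intro t h1 h2
        by_contra ht
        have := hwmax t ht
        omega)
      -- every other element of supp D leads to contradiction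
      have honly : ∀ t : ℤ, t ≠ w → D t = 0 := by
        intro t htne
        by_contra ht
        -- t ≤ x since (x, w) are trues or w itself
        have htw : t ≤ w := hwmax t ht
        have htx : t ≤ x := by
          by_contra hcon2
          push_neg at hcon2
          have : θ t = true := by
            have := hf (t - x) (by omega) (by omega)
            rwa [show x + (t - x) = t by ring] at this
          exact ht (hDtrue t this)
        -- take maximal such t
        set S' := S.erase w with hS'
        have hS'ne : S'.Nonempty := ⟨t, by
          rw [hS', Finset.mem_erase]
          exact ⟨htne, by simp [hS, Set.Finite.mem_toFinset]; exact ht⟩⟩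
        set w2 := S'.max' hS'ne with hw2
        have hw2mem : w2 ∈ S' := S'.max'_mem hS'ne
        rw [hS', Finset.mem_erase] at hw2mem
        obtain ⟨hw2ne, hw2S⟩ := hw2mem
        have hw2D : D w2 ≠ 0 := by simpa [hS, Set.Finite.mem_toFinset] using hw2S
        have hw2w : w2 ≤ w := hwmax w2 hw2D
        have hw2x : w2 ≤ x := by
          by_contra hcon2
          push_neg at hcon2
          have : θ w2 = true := by
            have h5 : w2 ≤ x + n := by omega
            have := hf (w2 - x) (by omega) (by omega)
            rwa [show x + (w2 - x) = w2 by ring] at this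
          exact hw2D (hDtrue w2 this)
        have := hA w2 hw2D (by
          intro s h1 h2
          by_contra hs
          have hsw : s ≤ w := hwmax s hs
          have hsne : s ≠ w := by omega
          have : s ∈ S' := by
            rw [hS', Finset.mem_erase]
            exact ⟨hsne, by simp [hS, Set.Finite.mem_toFinset]; exact hs⟩
          have := S'.le_max' s this
          omega)
        omega
      -- supp D = {w}: contradiction via finite support of d
      have hstep : ∀ t : ℤ, t ≠ w → d t = d (t - n) := by
        intro t ht
        have h0 := honly t ht
        simp only [hD] at h0
        exact char2_cancel h0
      have hnz : (n:ℤ) ≠ 0 := by omega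
      have hdw : d w = 0 := by
        apply shiftZero d hfind (n:ℤ) hnz w
        intro k
        have hne : w + ((k:ℤ)+1)*(n:ℤ) ≠ w := by
          have : (0:ℤ) < ((k:ℤ)+1)*(n:ℤ) := by positivity
          omega
        have := hstep _ hne
        rwa [show w + ((k:ℤ)+1)*(n:ℤ) - n = w + (k:ℤ)*(n:ℤ) by ring] at this
      have hdwn : d (w - n) = 0 := by
        apply shiftZero d hfind (-(n:ℤ)) (by omega) (w - n)
        intro k
        have hne : w - n + (k:ℤ)*(-(n:ℤ)) ≠ w := by
          have h1 : (0:ℤ) ≤ (k:ℤ)*(n:ℤ) := by positivity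
          have h2 : w - n + (k:ℤ)*(-(n:ℤ)) = w - n - (k:ℤ)*(n:ℤ) := by ring
          omega
        have := (hstep _ hne).symm
        rwa [show w - n + (k:ℤ)*(-(n:ℤ)) - n = w - n + ((k:ℤ)+1)*(-(n:ℤ)) by ring] at this
      apply hwmem
      simp only [hD]
      rw [hdw, hdwn, add_zero]
    -- D ≡ 0 and finite support force d ≡ 0
    have hdzero : ∀ y : ℤ, d y = 0 := by
      intro y
      apply shiftZero d hfind (-(n:ℤ)) (show -(n:ℤ) ≠ 0 by omega) y
      intro k
      have h0 := hDzero (y + (k:ℤ)*(-(n:ℤ)))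
      simp only [hD] at h0
      rw [show y + ((k:ℤ)+1)*(-(n:ℤ)) = y + (k:ℤ)*(-(n:ℤ)) - n by ring]
      exact (char2_cancel h0).symm
    funext y
    have := hdzero y
    simpa [hd, sub_eq_zero] using this
  · -- Not surjective
    intro hs
    obtain ⟨e, he⟩ := hs (fun y => if y = x then 1 else 0)
    have hkey : fgRule n θ e x = ∑ j ∈ Finset.Ioc (0:ℤ) (n:ℤ), fgRule n θ e (x + j) := by
      have hR : ∀ j ∈ Finset.Ioc (0:ℤ) (n:ℤ),
          fgRule n θ e (x + j) = e (x + j - (n:ℤ)) + e (x + j) := by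
        intro j hj
        rw [Finset.mem_Ioc] at hj
        have := hf j (by omega) hj.2
        simp [fgRule, this]
      rw [Finset.sum_congr rfl hR, sumWindow]
      simp [fgRule, hg]
    have hL : fgRule n θ e x = 1 := by rw [he]; simp
    have hR : fgRule n θ e x = 0 := by
      rw [hkey]
      apply Finset.sum_eq_zero
      intro j hj
      rw [Finset.mem_Ioc] at hj
      rw [he]
      have hne : x + j ≠ x := by omega
      simp [hne]
    rw [hL] at hR
    exact one_ne_zero hR
end

section
/- Let n ≥ 1 and Σ = ℤ₂ × ℤ₂. Define local rules γ_n and δ_n with neighbourhood (0,…,n+1) by: γ_n(a_0,…,a_{n+1})^{(1)} = a_0^{(1)} ⊕ a_{n+1}^{(1)} ⊕ a_0^{(2)}, δ_n(a_0,…,a_{n+1})^{(1)} = a_1^{(1)} ⊕ ⋯ ⊕ a_n^{(1)}, and both γ_n, δ_n have second component a_1^{(2)} ⊕ ⋯ ⊕ a_{n+1}^{(2)}. Let θ ∈ {γ_n, δ_n}^ℤ contain the pattern δ_n (γ_n)^n δ_n. Then there exist distinct asymptotic configurations c, e ∈ Σ^ℤ with H_θ(c) = H_θ(e); in particular H_θ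 is not pre-injective. -/
/-- Global update rule of the NUCA over ℤ with state set ℤ₂ × ℤ₂, neighbourhood
`(0,…,n+1)`, whose local rule at cell `x` is `γ_n` when `θ x = true` and `δ_n` when
`θ x = false`:
first track: `γ_n(a₀,…,a_{n+1})⁽¹⁾ = a₀⁽¹⁾ ⊕ a_{n+1}⁽¹⁾ ⊕ a₀⁽²⁾`,
`δ_n(a₀,…,a_{n+1})⁽¹⁾ = a₁⁽¹⁾ ⊕ ⋯ ⊕ aₙ⁽¹⁾`;
second track (both rules): `a₁⁽²⁾ ⊕ ⋯ ⊕ a_{n+1}⁽²⁾`. -/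
noncomputable def gdRule (n : ℕ) (θ : ℤ → Bool) (e : ℤ → ZMod 2 × ZMod 2) (x : ℤ) :
    ZMod 2 × ZMod 2 :=
  (if θ x then (e x).1 + (e (x + (n : ℤ) + 1)).1 + (e x).2
   else ∑ i ∈ Finset.Icc (1 : ℤ) (n : ℤ), (e (x + i)).1,
   ∑ i ∈ Finset.Icc (1 : ℤ) ((n : ℤ) + 1), (e (x + i)).2)

/-- if `θ` contains the pattern `δ_n (γ_n)^n δ_n` (γ-block on
`[x, x+n-1]`), then there exist distinct asymptotic configurations with the same
image; in particular `H_θ` is not pre-injective. -/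
theorem stmt_13 (n : ℕ) (hn : 1 ≤ n) (θ : ℤ → Bool) (x : ℤ)
    (hd1 : θ (x - 1) = false) (hg : ∀ i : ℤ, 0 ≤ i → i < n → θ (x + i) = true)
    (hd2 : θ (x + n) = false) :
    (∃ c e : ℤ → ZMod 2 × ZMod 2, c ≠ e ∧ {y : ℤ | c y ≠ e y}.Finite ∧
      gdRule n θ c = gdRule n θ e) ∧ ¬ PreInjective (gdRule n θ) := by
  classical
  set e : ℤ → ZMod 2 × ZMod 2 := fun y => if y = x + (n : ℤ) then (1, 0) else 0
    with he
  have he1 : ∀ z, z ≠ x + (n : ℤ) → (e z).1 = 0 := by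
    intro z hz; simp [he, hz]
  have he2 : ∀ z, (e z).2 = 0 := by
    intro z; simp only [he]; split <;> rfl
  have hne : (fun _ : ℤ => (0 : ZMod 2 × ZMod 2)) ≠ e := by
    intro h
    have h2 := congrFun h (x + (n : ℤ))
    simp [he, Prod.ext_iff] at h2
  have hfin : {y : ℤ | (fun _ : ℤ => (0 : ZMod 2 × ZMod 2)) y ≠ e y}.Finite := by
    apply Set.Finite.subset (Set.finite_singleton (x + (n : ℤ)))
    intro y hy
    simp only [Set.mem_setOf_eq, Set.mem_singleton_iff] at hy ⊢
    by_contra hcon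
    exact hy (by simp [he, hcon])
  have himg : gdRule n θ (fun _ => 0) = gdRule n θ e := by
    funext y
    unfold gdRule
    refine Prod.ext ?_ ?_
    · simp only
      by_cases hy : θ y
      · rw [if_pos hy, if_pos hy]
        have hy1 : y ≠ x + (n : ℤ) := by
          intro h; rw [h, hd2] at hy; exact Bool.false_ne_true hy
        have hy2 : y + (n : ℤ) + 1 ≠ x + (n : ℤ) := by
          intro h
          have hyx : y = x - 1 := by omega
          rw [hyx, hd1] at hy; exact Bool.false_ne_true hy
        rw [he1 y hy1, he1 _ hy2, he2]; rfl
      · rw [if_neg hy, if_neg hy]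
        rw [Finset.sum_eq_zero, Finset.sum_eq_zero]
        · intro i hi
          rw [Finset.mem_Icc] at hi
          apply he1
          intro hcon
          have hj := hg (y - x) (by omega) (by omega)
          rw [show x + (y - x) = y by ring] at hj
          exact hy hj
        · intro i _; rfl
    · simp only
      rw [Finset.sum_eq_zero, Finset.sum_eq_zero]
      · intro i _; exact he2 _
      · intro i _; rfl
  refine ⟨⟨_, _, hne, hfin, himg⟩, fun h => hne (h _ _ hfin himg)⟩
end

section
/- Let n ≥ 1, Σ = ℤ₂ × ℤ₂, and γ_n, δ_n the local rules with neighbourhood (0,…,n+1) defined by γ_n(a_0,…,a_{n+1})^{(1)} = a_0^{(1)} ⊕ a_{n+1}^{(1)} ⊕ a_0^{(2)}, δ_n(a_0,…,a_{n+1})^{(1)} = a_1^{(1)} ⊕ ⋯ ⊕ a_n^{(1)}, and both rules' second component equal to a_1^{(2)} ⊕ ⋯ ⊕ a_{n+1}^{(2)}. Let θ ∈ {γ_n, δ_n}^ℤ have at most one block of n consecutive γ_n cells. Then the global update rule H_θ is surjective. -/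
namespace Stmt14Aux

open Finset

/-! ### Generic one-directional builders over ℤ -/

variable {g0 : ℤ → ZMod 2} {step : ℤ → (ℤ → ZMod 2) → ZMod 2} {s : ℤ}

def upF (g0 : ℤ → ZMod 2) (step : ℤ → (ℤ → ZMod 2) → ZMod 2) (s : ℤ) : ℕ → ℤ → ZMod 2
  | 0 => g0
  | k+1 => fun y => if y = s + k then step y (upF g0 step s k) else upF g0 step s k y

def buildUp (g0 : ℤ → ZMod 2) (step : ℤ → (ℤ → ZMod 2) → ZMod 2) (s : ℤ) : ℤ → ZMod 2 :=
  fun y => upF g0 step s ((y - s).toNat + 1) y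

lemma upF_out (k : ℕ) (y : ℤ) (h : y < s ∨ s + k ≤ y) : upF g0 step s k y = g0 y := by
  induction k with
  | zero => rfl
  | succ k ih =>
    have hne : y ≠ s + k := by omega
    simp only [upF, if_neg hne]
    exact ih (by omega)

lemma upF_stab (k : ℕ) (y : ℤ) (h : (y - s).toNat + 1 ≤ k) :
    upF g0 step s k y = buildUp g0 step s y := by
  induction k with
  | zero => omega
  | succ k ih =>
    rcases Nat.lt_or_ge ((y - s).toNat + 1) (k+1) with h1 | h1
    · have hne : y ≠ s + k := by omega
      simp only [upF, if_neg hne]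
      exact ih (by omega)
    · have : (y - s).toNat + 1 = k + 1 := by omega
      rw [buildUp, this]

lemma buildUp_lt (h : y < s) : buildUp g0 step s y = g0 y :=
  upF_out _ _ (Or.inl h)

lemma buildUp_eq (h : s ≤ y)
    (hdep : ∀ g g' : ℤ → ZMod 2, (∀ z, z < y → g z = g' z) → step y g = step y g') :
    buildUp g0 step s y = step y (buildUp g0 step s) := by
  have hy : y = s + ((y - s).toNat : ℤ) := by omega
  have h1 : buildUp g0 step s y = step y (upF g0 step s ((y - s).toNat)) := by
    rw [buildUp]
    simp only [upF]
    rw [if_pos hy]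
  rw [h1]
  apply hdep
  intro z hz
  rcases lt_or_ge z s with h2 | h2
  · rw [upF_out _ _ (Or.inl h2), buildUp_lt h2]
  · exact upF_stab _ _ (by omega)

def downF (g0 : ℤ → ZMod 2) (step : ℤ → (ℤ → ZMod 2) → ZMod 2) (s : ℤ) : ℕ → ℤ → ZMod 2
  | 0 => g0
  | k+1 => fun y => if y = s - k then step y (downF g0 step s k) else downF g0 step s k y

def buildDown (g0 : ℤ → ZMod 2) (step : ℤ → (ℤ → ZMod 2) → ZMod 2) (s : ℤ) : ℤ → ZMod 2 :=
  fun y => downF g0 step s ((s - y).toNat + 1) y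

lemma downF_out (k : ℕ) (y : ℤ) (h : s < y ∨ y ≤ s - k) : downF g0 step s k y = g0 y := by
  induction k with
  | zero => rfl
  | succ k ih =>
    have hne : y ≠ s - k := by omega
    simp only [downF, if_neg hne]
    exact ih (by omega)

lemma downF_stab (k : ℕ) (y : ℤ) (h : (s - y).toNat + 1 ≤ k) :
    downF g0 step s k y = buildDown g0 step s y := by
  induction k with
  | zero => omega
  | succ k ih =>
    rcases Nat.lt_or_ge ((s - y).toNat + 1) (k+1) with h1 | h1
    · have hne : y ≠ s - k := by omega
      simp only [downF, if_neg hne]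
      exact ih (by omega)
    · have : (s - y).toNat + 1 = k + 1 := by omega
      rw [buildDown, this]

lemma buildDown_gt (h : s < y) : buildDown g0 step s y = g0 y :=
  downF_out _ _ (Or.inl h)

lemma buildDown_eq (h : y ≤ s)
    (hdep : ∀ g g' : ℤ → ZMod 2, (∀ z, y < z → g z = g' z) → step y g = step y g') :
    buildDown g0 step s y = step y (buildDown g0 step s) := by
  have hy : y = s - ((s - y).toNat : ℤ) := by omega
  have h1 : buildDown g0 step s y = step y (downF g0 step s ((s - y).toNat)) := by
    rw [buildDown]
    simp only [downF]
    rw [if_pos hy]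
  rw [h1]
  apply hdep
  intro z hz
  rcases lt_or_ge s z with h2 | h2
  · rw [downF_out _ _ (Or.inl h2), buildDown_gt h2]
  · exact downF_stab _ _ (by omega)


/-! ### sum helpers -/

lemma sum_Icc_top {M : Type*} [AddCommMonoid M] (f : ℤ → M) {a b : ℤ} (h : a ≤ b) :
    ∑ w ∈ Icc a b, f w = (∑ w ∈ Icc a (b-1), f w) + f b := by
  have he : Icc a b = insert b (Icc a (b-1)) := by
    ext w; simp only [mem_Icc, mem_insert]; omega
  rw [he, Finset.sum_insert (by simp only [mem_Icc]; omega), add_comm]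

lemma sum_Icc_bot {M : Type*} [AddCommMonoid M] (f : ℤ → M) {a b : ℤ} (h : a ≤ b) :
    ∑ w ∈ Icc a b, f w = f a + (∑ w ∈ Icc (a+1) b, f w) := by
  have he : Icc a b = insert a (Icc (a+1) b) := by
    ext w; simp only [mem_Icc, mem_insert]; omega
  rw [he, Finset.sum_insert (by simp only [mem_Icc]; omega)]

lemma sum_shift {M : Type*} [AddCommMonoid M] (f : ℤ → M) (d lo hi : ℤ) :
    ∑ w ∈ Icc (d+lo) (d+hi), f w = ∑ i ∈ Icc lo hi, f (d+i) := by
  rw [← Finset.map_add_left_Icc, Finset.sum_map]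
  rfl

/-! ### Setup -/

structure Setup (n : ℕ) (θ : ℤ → Bool) (p : ℤ) : Prop where
  hn : 1 ≤ n
  hp : θ p = false
  hu : ∀ z : ℤ, (∀ i : ℤ, 0 ≤ i → i < (n : ℤ) → θ (z + i) = true) → z = p + 1

variable {n : ℕ} {θ : ℤ → Bool} {p : ℤ}

lemma Setup.noext (S : Setup n θ p) (z : ℤ)
    (h : ∀ i : ℤ, 0 ≤ i → i ≤ (n : ℤ) → θ (z + i) = true) : False := by
  have h1 : z = p + 1 := S.hu z (fun i h0 hi => h i h0 (by omega))
  have h2 : z + 1 = p + 1 := S.hu (z+1) (fun i h0 hi => by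
    have := h (i+1) (by omega) (by omega)
    rwa [show z + 1 + i = z + (i+1) by ring])
  omega

lemma Setup.hexE (S : Setup n θ p) (z : ℤ) : ∃ k : ℕ, θ (z + k + 1) = false := by
  by_contra hc
  push_neg at hc
  refine S.noext (z+1) (fun i h0 hi => ?_)
  have := hc i.toNat
  simp only [ne_eq, Bool.not_eq_false] at this
  rwa [show z + 1 + i = z + (i.toNat : ℤ) + 1 by omega]

lemma Setup.hexS (S : Setup n θ p) (z : ℤ) : ∃ k : ℕ, θ (z - k - 1) = false := by
  by_contra hc
  push_neg at hc
  refine S.noext (z - (n:ℤ) - 1) (fun i h0 hi => ?_)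
  have := hc ((n:ℤ) - i).toNat
  simp only [ne_eq, Bool.not_eq_false] at this
  rwa [show z - (n:ℤ) - 1 + i = z - (((n:ℤ) - i).toNat : ℤ) - 1 by omega]
/-! ### run boundaries -/

def runEnd (S : Setup n θ p) (z : ℤ) : ℤ := z + Nat.find (S.hexE z)

def runStart (S : Setup n θ p) (z : ℤ) : ℤ := z - Nat.find (S.hexS z)

lemma runEnd_ge (S : Setup n θ p) (z : ℤ) : z ≤ runEnd S z := by
  have : (0:ℤ) ≤ (Nat.find (S.hexE z) : ℤ) := by positivity
  unfold runEnd; omega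

lemma runEnd_false (S : Setup n θ p) (z : ℤ) : θ (runEnd S z + 1) = false := by
  have := Nat.find_spec (S.hexE z)
  rwa [runEnd]

lemma runEnd_interior (S : Setup n θ p) {z w : ℤ} (h1 : z < w) (h2 : w ≤ runEnd S z) :
    θ w = true := by
  have hk : (w - z - 1).toNat < Nat.find (S.hexE z) := by unfold runEnd at h2; omega
  have := Nat.find_min (S.hexE z) hk
  simp only [Bool.not_eq_false] at this
  rwa [show w = z + ((w - z - 1).toNat : ℤ) + 1 by omega]

lemma runEnd_lt (S : Setup n θ p) {z : ℤ} (hz : θ z = true) : runEnd S z < z + n := by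
  by_contra hc
  push_neg at hc
  refine S.noext z (fun i h0 hi => ?_)
  rcases eq_or_lt_of_le h0 with h | h
  · rwa [← h, add_zero]
  · exact runEnd_interior S (z := z) (by omega) (by omega)

lemma runEnd_unique (S : Setup n θ p) {z t : ℤ} (h3 : z ≤ t)
    (h : ∀ w, z < w → w ≤ t → θ w = true) (h2 : θ (t+1) = false) :
    runEnd S z = t := by
  have hle : runEnd S z ≤ t := by
    have hsp : θ (z + (((t - z).toNat : ℕ) : ℤ) + 1) = false := by
      rwa [show z + (((t - z).toNat : ℕ) : ℤ) + 1 = t + 1 by omega]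
    have := @Nat.find_le ((t - z).toNat) (fun k : ℕ => θ (z + (k:ℤ) + 1) = false) _ (S.hexE z) hsp
    unfold runEnd; omega
  rcases eq_or_lt_of_le hle with h4 | h4
  · exact h4
  · have := h (runEnd S z + 1) (by have := runEnd_ge S z; omega) (by omega)
    rw [runEnd_false S z] at this
    exact absurd this (by simp)

lemma runStart_le (S : Setup n θ p) (z : ℤ) : runStart S z ≤ z := by
  have : (0:ℤ) ≤ (Nat.find (S.hexS z) : ℤ) := by positivity
  unfold runStart; omega

lemma runStart_false (S : Setup n θ p) (z : ℤ) : θ (runStart S z - 1) = false := by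
  have := Nat.find_spec (S.hexS z)
  rwa [runStart]

lemma runStart_interior (S : Setup n θ p) {z w : ℤ} (h1 : runStart S z ≤ w) (h2 : w < z) :
    θ w = true := by
  have hk : (z - w - 1).toNat < Nat.find (S.hexS z) := by unfold runStart at h1; omega
  have := Nat.find_min (S.hexS z) hk
  simp only [Bool.not_eq_false] at this
  rwa [show w = z - ((z - w - 1).toNat : ℤ) - 1 by omega]

lemma runStart_gt (S : Setup n θ p) {z : ℤ} (hz : θ z = true) : z - n < runStart S z := by
  by_contra hc
  push_neg at hc
  refine S.noext (z - (n:ℤ)) (fun i h0 hi => ?_)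
  rcases eq_or_lt_of_le hi with h | h
  · rw [h]; rwa [show z - (n:ℤ) + (n:ℤ) = z by ring]
  · exact runStart_interior S (z := z) (by omega) (by omega)

lemma runStart_unique (S : Setup n θ p) {z s : ℤ} (h3 : s ≤ z)
    (h : ∀ w, s ≤ w → w < z → θ w = true) (h2 : θ (s-1) = false) :
    runStart S z = s := by
  have hle : s ≤ runStart S z := by
    have hsp : θ (z - (((z - s).toNat : ℕ) : ℤ) - 1) = false := by
      rwa [show z - (((z - s).toNat : ℕ) : ℤ) - 1 = s - 1 by omega]
    have := @Nat.find_le ((z - s).toNat) (fun k : ℕ => θ (z - (k:ℤ) - 1) = false) _ (S.hexS z) hsp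
    unfold runStart; omega
  rcases eq_or_lt_of_le hle with h4 | h4
  · exact h4.symm
  · have := h (runStart S z - 1) (by omega) (by have := runStart_le S z; omega)
    rw [runStart_false S z] at this
    exact absurd this (by simp)




/-! ### the second-track configuration b -/

noncomputable def Kb (c : ℤ → ZMod 2 × ZMod 2) (n : ℕ) (p : ℤ) : ZMod 2 :=
  (c p).1 + (∑ x ∈ Icc (p+1) (p+(n:ℤ)), (c x).1) + (c (p+(n:ℤ)+1)).1

noncomputable def seedB (c : ℤ → ZMod 2 × ZMod 2) (n : ℕ) (p : ℤ) : ℤ → ZMod 2 := fun y =>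
  if y = p+1 then Kb c n p else if y = p+(n:ℤ)+1 then (c p).2 + Kb c n p else 0

noncomputable def bb (S : Setup n θ p) (c : ℤ → ZMod 2 × ZMod 2) : ℤ → ZMod 2 :=
  buildUp
    (buildDown (seedB c n p) (fun y g => (c (y-1)).2 + ∑ w ∈ Icc (y+1) (y+(n:ℤ)), g w) p)
    (fun y g => (c (y-(n:ℤ)-1)).2 + ∑ w ∈ Icc (y-(n:ℤ)) (y-1), g w)
    (p+(n:ℤ)+2)

variable (S : Setup n θ p) (c : ℤ → ZMod 2 × ZMod 2)

lemma bb_seed {y : ℤ} (h1 : p+1 ≤ y) (h2 : y ≤ p+(n:ℤ)+1) : bb S c y = seedB c n p y := by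
  rw [bb, buildUp_lt (by omega), buildDown_gt (by omega)]

lemma bb_up {y : ℤ} (h : p+(n:ℤ)+2 ≤ y) :
    bb S c y = (c (y-(n:ℤ)-1)).2 + ∑ w ∈ Icc (y-(n:ℤ)) (y-1), bb S c w := by
  rw [bb, buildUp_eq h]
  intro g g' hgg
  congr 1
  exact Finset.sum_congr rfl (fun w hw => hgg w (by simp only [mem_Icc] at hw; omega))

lemma bb_down {y : ℤ} (h : y ≤ p) :
    bb S c y = (c (y-1)).2 + ∑ w ∈ Icc (y+1) (y+(n:ℤ)), bb S c w := by
  have h0 : bb S c y = buildDown (seedB c n p)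
      (fun y g => (c (y-1)).2 + ∑ w ∈ Icc (y+1) (y+(n:ℤ)), g w) p y := by
    rw [bb, buildUp_lt (by omega)]
  rw [h0, buildDown_eq h ?hdep]
  case hdep =>
    intro g g' hgg
    congr 1
    exact Finset.sum_congr rfl (fun w hw => hgg w (by simp only [mem_Icc] at hw; omega))
  congr 1
  refine Finset.sum_congr rfl (fun w hw => ?_)
  simp only [mem_Icc] at hw
  have : w ≤ p + (n:ℤ) := by omega
  rw [show buildDown (seedB c n p)
      (fun y g => (c (y-1)).2 + ∑ w ∈ Icc (y+1) (y+(n:ℤ)), g w) p w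
      = bb S c w by rw [bb, buildUp_lt (by omega)]]

lemma sum_seedB (hn1 : 1 ≤ n) : ∑ w ∈ Icc (p+1) (p+(n:ℤ)), seedB c n p w = Kb c n p := by
  have h1 : (1:ℤ) ≤ (n:ℤ) := by exact_mod_cast hn1
  rw [Finset.sum_eq_single_of_mem (p+1) (by simp only [mem_Icc]; omega)]
  · simp [seedB]
  · intro w hw hne
    simp only [mem_Icc] at hw
    rw [seedB, if_neg hne, if_neg (by omega)]

/-- E1 : the second-track equation holds everywhere -/
lemma E1 (x : ℤ) : ∑ w ∈ Icc (x+1) (x+(n:ℤ)+1), bb S c w = (c x).2 := by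
  have h1 : (1:ℤ) ≤ (n:ℤ) := by exact_mod_cast S.hn
  rcases lt_trichotomy x p with hx | hx | hx
  · -- x ≤ p - 1 : use bb_down at cell x+1
    have hd := bb_down S c (y := x+1) (by omega)
    rw [sum_Icc_bot _ (by omega), hd]
    rw [show x+1+1 = x+2 by ring, show x+1-1 = x by ring, show x+1+(n:ℤ) = x+(n:ℤ)+1 by ring]
    have key : ∀ A B : ZMod 2, (B + A) + A = B := by decide
    exact key _ _
  · -- x = p : seed window
    subst hx
    have hs : ∀ w ∈ Icc (x+1) (x+(n:ℤ)+1), bb S c w = seedB c n x w := by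
      intro w hw; simp only [mem_Icc] at hw
      exact bb_seed S c (by omega) (by omega)
    rw [Finset.sum_congr rfl hs, sum_Icc_top _ (by omega),
      show x+(n:ℤ)+1-1 = x+(n:ℤ) by ring, sum_seedB c S.hn]
    rw [seedB, if_neg (by omega), if_pos rfl]
    have key : ∀ A B : ZMod 2, A + (B + A) = B := by decide
    exact key _ _
  · -- x ≥ p+1 : use bb_up at cell x+n+1
    have hd := bb_up S c (y := x+(n:ℤ)+1) (by omega)
    rw [sum_Icc_top _ (by omega), hd]
    rw [show x+(n:ℤ)+1-1 = x+(n:ℤ) by ring, show x+(n:ℤ)+1-(n:ℤ)-1 = x by ring,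
      show x+(n:ℤ)+1-(n:ℤ) = x+1 by ring]
    have key : ∀ A B : ZMod 2, A + (B + A) = B := by decide
    exact key _ _

/-! ### the first-track configuration a -/

def seedA (c : ℤ → ZMod 2 × ZMod 2) (p : ℤ) : ℤ → ZMod 2 := fun y =>
  if y = p+1 then (c p).1 else 0

/-- downward (left) step rule, for cells `y ≤ p`; reads only cells `> y`. -/
noncomputable def stepD (S : Setup n θ p) (c : ℤ → ZMod 2 × ZMod 2) (y : ℤ) (g : ℤ → ZMod 2) : ZMod 2 :=
  if θ (y-1) = false then (c (y-1)).1 + ∑ w ∈ Icc (y+1) (y+(n:ℤ)-1), g w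
  else if θ y = true then (c y).1 + bb S c y + g (y+(n:ℤ)+1)
  else
    (c (runStart S (y-1) - 1)).1 + (c (runStart S (y-1))).1 + bb S c (runStart S (y-1))
      + g (runStart S (y-1)+(n:ℤ)+1)
      + ∑ w ∈ (Icc (runStart S (y-1)+1) (runStart S (y-1)+(n:ℤ)-1)).erase y,
          (if y < w then g w else (c w).1 + bb S c w + g (w+(n:ℤ)+1))

/-- upward (right) step rule, for cells `y ≥ p+n+1`; reads only cells `< y`. -/
noncomputable def stepU (S : Setup n θ p) (c : ℤ → ZMod 2 × ZMod 2) (y : ℤ) (g : ℤ → ZMod 2) : ZMod 2 :=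
  if θ (y-(n:ℤ)) = false then (c (y-(n:ℤ))).1 + ∑ w ∈ Icc (y-(n:ℤ)+1) (y-1), g w
  else if θ (y-(n:ℤ)-1) = true then (c (y-(n:ℤ)-1)).1 + bb S c (y-(n:ℤ)-1) + g (y-(n:ℤ)-1)
  else if runEnd S (y-(n:ℤ)) = y - 1 then 0
  else
    (c (runEnd S (y-(n:ℤ)))).1 + bb S c (runEnd S (y-(n:ℤ))) + g (runEnd S (y-(n:ℤ)))
      + (c (runEnd S (y-(n:ℤ)) + 1)).1
      + ∑ z ∈ (Icc (runEnd S (y-(n:ℤ))+2) (runEnd S (y-(n:ℤ))+(n:ℤ))).erase y,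
          (if z < y then g z
           else (c (z-(n:ℤ)-1)).1 + bb S c (z-(n:ℤ)-1) + g (z-(n:ℤ)-1))

noncomputable def aa (S : Setup n θ p) (c : ℤ → ZMod 2 × ZMod 2) : ℤ → ZMod 2 :=
  buildUp (buildDown (seedA c p) (stepD S c) p) (stepU S c) (p+(n:ℤ)+1)

lemma stepD_congr (y : ℤ) (g g' : ℤ → ZMod 2)
    (h1 : ∀ z, y < z → z ≤ y+(n:ℤ) → g z = g' z)
    (h2 : θ y = true → g (y+(n:ℤ)+1) = g' (y+(n:ℤ)+1)) :
    stepD S c y g = stepD S c y g' := by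
  have hn1 : (1:ℤ) ≤ (n:ℤ) := by exact_mod_cast S.hn
  unfold stepD
  split_ifs with hA hB
  · congr 1
    exact Finset.sum_congr rfl (fun w hw => h1 w (by simp only [mem_Icc] at hw; omega)
      (by simp only [mem_Icc] at hw; omega))
  · rw [h2 hB]
  · -- r-cell case: θ (y-1) = true, θ y = false
    have hθ : θ (y-1) = true := by
      exact eq_true_of_ne_false hA

    have hs1 : runStart S (y-1) ≤ y - 1 := runStart_le S (y-1)
    have hs2 : y - 1 - (n:ℤ) < runStart S (y-1) := runStart_gt S hθ
    congr 1
    · rw [h1 (runStart S (y-1)+(n:ℤ)+1) (by omega) (by omega)]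
    · refine Finset.sum_congr rfl (fun w hw => ?_)
      simp only [Finset.mem_erase, mem_Icc] at hw
      by_cases hyw : y < w
      · rw [if_pos hyw, if_pos hyw, h1 w (by omega) (by omega)]
      · rw [if_neg hyw, if_neg hyw, h1 (w+(n:ℤ)+1) (by omega) (by omega)]

lemma stepU_congr (y : ℤ) (g g' : ℤ → ZMod 2)
    (h1 : ∀ z, z < y → g z = g' z) :
    stepU S c y g = stepU S c y g' := by
  have hn1 : (1:ℤ) ≤ (n:ℤ) := by exact_mod_cast S.hn
  unfold stepU
  split_ifs with hA hB hC
  · congr 1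
    exact Finset.sum_congr rfl (fun w hw => h1 w (by simp only [mem_Icc] at hw; omega))
  · rw [h1 (y-(n:ℤ)-1) (by omega)]
  · rfl
  · have hθ : θ (y-(n:ℤ)) = true := eq_true_of_ne_false hA
    have ht1 : y - (n:ℤ) ≤ runEnd S (y-(n:ℤ)) := runEnd_ge S _
    have ht2 : runEnd S (y-(n:ℤ)) < y - (n:ℤ) + (n:ℤ) := runEnd_lt S hθ
    congr 1
    · rw [h1 (runEnd S (y-(n:ℤ))) (by omega)]
    · refine Finset.sum_congr rfl (fun z hz => ?_)
      simp only [Finset.mem_erase, mem_Icc] at hz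
      by_cases hzy : z < y
      · rw [if_pos hzy, if_pos hzy, h1 z hzy]
      · rw [if_neg hzy, if_neg hzy, h1 (z-(n:ℤ)-1) (by omega)]

lemma aa_seed {y : ℤ} (h1 : p+1 ≤ y) (h2 : y ≤ p+(n:ℤ)) : aa S c y = seedA c p y := by
  rw [aa, buildUp_lt (by omega), buildDown_gt (by omega)]

lemma aa_up {y : ℤ} (h : p+(n:ℤ)+1 ≤ y) : aa S c y = stepU S c y (aa S c) := by
  rw [aa, buildUp_eq h]
  intro g g' hgg
  exact stepU_congr S c y g g' hgg

lemma aa_low {y : ℤ} (h : y ≤ p) : aa S c y = stepD S c y (aa S c) := by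
  have hn1 : (1:ℤ) ≤ (n:ℤ) := by exact_mod_cast S.hn
  have h0 : aa S c y = buildDown (seedA c p) (stepD S c) p y := by
    rw [aa, buildUp_lt (by omega)]
  rw [h0, buildDown_eq h (fun g g' hgg => stepD_congr S c y g g'
      (fun z hz _ => hgg z hz) (fun _ => hgg _ (by omega)))]
  refine stepD_congr S c y _ _ (fun z hz1 hz2 => ?_) (fun hθy => ?_)
  · rw [show buildDown (seedA c p) (stepD S c) p z = aa S c z by rw [aa, buildUp_lt (by omega)]]
  · have hyp : y ≠ p := fun he => by rw [he, S.hp] at hθy; exact absurd hθy (by simp)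
    rw [show buildDown (seedA c p) (stepD S c) p (y+(n:ℤ)+1) = aa S c (y+(n:ℤ)+1) by
      rw [aa, buildUp_lt (by omega)]]

lemma sum_seedA (hn1 : 1 ≤ n) : ∑ w ∈ Icc (p+1) (p+(n:ℤ)), seedA c p w = (c p).1 := by
  have h1 : (1:ℤ) ≤ (n:ℤ) := by exact_mod_cast hn1
  rw [Finset.sum_eq_single_of_mem (p+1) (by simp only [mem_Icc]; omega)]
  · simp [seedA]
  · intro w hw hne
    simp only [mem_Icc] at hw
    rw [seedA, if_neg hne]

/-- E2 : the first-track equation at δ-cells -/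
lemma E2 (x : ℤ) (hx : θ x = false) :
    ∑ w ∈ Icc (x+1) (x+(n:ℤ)), aa S c w = (c x).1 := by
  have hn1 : (1:ℤ) ≤ (n:ℤ) := by exact_mod_cast S.hn
  rcases lt_trichotomy x p with hxp | hxp | hxp
  · -- left zone
    have hd := aa_low S c (y := x+1) (by omega)
    unfold stepD at hd
    rw [show x+1-1 = x by ring] at hd
    rw [if_pos hx, show x+1+1 = x+2 by ring, show x+1+(n:ℤ)-1 = x+(n:ℤ) by ring] at hd
    rw [sum_Icc_bot _ (by omega), show x+1+1 = x+2 by ring, hd]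
    have key : ∀ A B : ZMod 2, (B + A) + A = B := by decide
    exact key _ _
  · -- seed zone
    subst hxp
    have hs : ∀ w ∈ Icc (x+1) (x+(n:ℤ)), aa S c w = seedA c x w := by
      intro w hw; simp only [mem_Icc] at hw
      exact aa_seed S c (by omega) (by omega)
    rw [Finset.sum_congr rfl hs, sum_seedA c S.hn]
  · -- right zone
    have hd := aa_up S c (y := x+(n:ℤ)) (by omega)
    unfold stepU at hd
    rw [show x+(n:ℤ)-(n:ℤ) = x by ring] at hd
    rw [if_pos hx] at hd
    rw [sum_Icc_top _ (by omega), hd]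
    have key : ∀ A B : ZMod 2, A + (B + A) = B := by decide
    exact key _ _

/-- E3 : the first-track equation at γ-cells -/
lemma E3 (x : ℤ) (hx : θ x = true) :
    aa S c x + aa S c (x+(n:ℤ)+1) + bb S c x = (c x).1 := by
  have hn1 : (1:ℤ) ≤ (n:ℤ) := by exact_mod_cast S.hn
  have hxp : x ≠ p := fun he => by rw [he, S.hp] at hx; exact absurd hx (by simp)
  have key4 : ∀ A B C X : ZMod 2, X = C + B + A → X + A + B = C := by decide
  rcases lt_or_gt_of_ne hxp with hxp | hxp
  · -- x ≤ p - 1 : left zone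
    rcases Bool.eq_false_or_eq_true (θ (x-1)) with hθ0 | hθ0
    · -- interior run cell on the left
      have hd := aa_low S c (y := x) (by omega)
      unfold stepD at hd
      rw [if_neg (by simp [hθ0]), if_pos hx] at hd
      exact key4 _ _ _ _ hd
    · -- run-start cell: use the r-cell at t+1
      have ht0 : x ≤ runEnd S x := runEnd_ge S x
      have ht2 : runEnd S x < x + (n:ℤ) := runEnd_lt S hx
      have htF : θ (runEnd S x + 1) = false := runEnd_false S x
      set t := runEnd S x with htdef
      have hintE : ∀ w, x < w → w ≤ t → θ w = true := fun w h1 h2 => runEnd_interior S h1 h2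
      have hθt : θ t = true := by
        rcases eq_or_lt_of_le ht0 with he | hlt
        · rwa [← he]
        · exact hintE t hlt le_rfl
      have htp : t ≤ p - 1 := by
        by_contra hc
        have := hintE p (by omega) (by omega)
        rw [S.hp] at this; exact absurd this (by simp)
      have hNS : t ≤ x + (n:ℤ) - 2 := by
        by_contra hc
        have hteq : t = x + (n:ℤ) - 1 := by omega
        have hbl : x = p + 1 := by
          refine S.hu x (fun i h0 hi => ?_)
          rcases eq_or_lt_of_le h0 with he | hlt
          · rwa [← he, add_zero]
          · exact hintE (x+i) (by omega) (by omega)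
        omega
      have hrs : runStart S t = x := by
        refine runStart_unique S ht0 (fun w h1 h2 => ?_) hθ0
        rcases eq_or_lt_of_le h1 with he | hlt
        · rwa [← he]
        · exact hintE w hlt (by omega)
      have e1 := aa_low S c (y := t+1) (by omega)
      unfold stepD at e1
      rw [show t+1-1 = t by ring] at e1
      rw [if_neg (by simp [hθt]), if_neg (by simp [htF]), hrs] at e1
      have helts : ∀ w ∈ (Icc (x+1) (x+(n:ℤ)-1)).erase (t+1),
          (if t+1 < w then aa S c w else (c w).1 + bb S c w + aa S c (w+(n:ℤ)+1))
            = aa S c w := by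
        intro w hw
        simp only [Finset.mem_erase, mem_Icc] at hw
        by_cases hlt : t+1 < w
        · rw [if_pos hlt]
        · rw [if_neg hlt]
          have hw1 : θ (w-1) = true := by
            rcases eq_or_lt_of_le (show x ≤ w - 1 by omega) with he | hgt
            · rwa [← he]
            · exact hintE (w-1) hgt (by omega)
          have hw2 : θ w = true := hintE w (by omega) (by omega)
          have h2 := aa_low S c (y := w) (by omega)
          unfold stepD at h2
          rw [if_neg (by simp [hw1]), if_pos hw2] at h2
          exact h2.symm
      rw [Finset.sum_congr rfl helts] at e1
      have e3 := aa_low S c (y := x) (by omega)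
      unfold stepD at e3
      rw [if_pos hθ0] at e3
      have hmem : t+1 ∈ Icc (x+1) (x+(n:ℤ)-1) := by simp only [mem_Icc]; omega
      rw [← Finset.add_sum_erase _ _ hmem] at e3
      have key : ∀ A B C1 C2 Se T X : ZMod 2,
          X = C1 + (T + Se) → T = C1 + C2 + B + A + Se → X + A + B = C2 := by decide
      exact key _ _ _ _ _ _ _ e3 e1
  · -- x ≥ p + 1 : right zone
    rcases Bool.eq_false_or_eq_true (θ (x+1)) with hθ1 | hθ1
    · -- interior run cell on the right
      have hd := aa_up S c (y := x+(n:ℤ)+1) (by omega)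
      unfold stepU at hd
      rw [show x+(n:ℤ)+1-(n:ℤ) = x+1 by ring, show x+1-1 = x by ring] at hd
      rw [if_neg (by simp [hθ1]), if_pos hx] at hd
      have key5 : ∀ A B C X : ZMod 2, A = C + B + X → X + A + B = C := by decide
      exact key5 _ _ _ _ hd
    · -- run-end cell on the right
      have hs1 : runStart S x ≤ x := runStart_le S x
      have hs2 : x - (n:ℤ) < runStart S x := runStart_gt S hx
      have hsF : θ (runStart S x - 1) = false := runStart_false S x
      set s := runStart S x with hsdef
      have hint : ∀ w, s ≤ w → w < x → θ w = true := fun w h1 h2 => runStart_interior S h1 h2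
      have hθw : ∀ w, s ≤ w → w ≤ x → θ w = true := by
        intro w h1 h2
        rcases eq_or_lt_of_le h2 with he | hlt
        · rwa [he]
        · exact hint w h1 hlt
      have hsp : p+1 ≤ s := by
        by_contra hc
        have := hint p (by omega) (by omega)
        rw [S.hp] at this; exact absurd this (by simp)
      have hre : runEnd S s = x :=
        runEnd_unique S hs1 (fun w h1 h2 => hθw w (by omega) h2) hθ1
      by_cases hsp2 : s + (n:ℤ) - 1 = x
      · -- the special (length n) run : s = p+1
        have hseq : s = p + 1 := by
          refine S.hu s (fun i h0 hi => ?_)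
          exact hθw (s+i) (by omega) (by omega)
        have hxv : x = p + (n:ℤ) := by omega
        subst hxv
        -- the claimed cell x+n+1
        have hcl := aa_up S c (y := p+(n:ℤ)+(n:ℤ)+1) (by omega)
        unfold stepU at hcl
        rw [show p+(n:ℤ)+(n:ℤ)+1-(n:ℤ) = p+(n:ℤ)+1 by ring] at hcl
        rw [if_pos hθ1, show p+(n:ℤ)+1+1 = p+(n:ℤ)+2 by ring,
          show p+(n:ℤ)+(n:ℤ)+1-1 = p+(n:ℤ)+(n:ℤ) by ring] at hcl
        -- rewrite the sum cell-by-cell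
        have hsh : ∑ w ∈ Icc (p+(n:ℤ)+2) (p+(n:ℤ)+(n:ℤ)), aa S c w
            = ∑ i ∈ Icc (p+1) (p+(n:ℤ)-1), aa S c ((n:ℤ)+1+i) := by
          rw [← sum_shift (aa S c) ((n:ℤ)+1) (p+1) (p+(n:ℤ)-1)]
          congr 1 <;> ring_nf
        have hmid : ∀ i ∈ Icc (p+1) (p+(n:ℤ)-1),
            aa S c ((n:ℤ)+1+i) = (c i).1 + bb S c i + seedA c p i := by
          intro i hi
          simp only [mem_Icc] at hi
          have h2 := aa_up S c (y := (n:ℤ)+1+i) (by omega)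
          unfold stepU at h2
          rw [show (n:ℤ)+1+i-(n:ℤ) = i+1 by ring, show i+1-1 = i by ring] at h2
          have hθi1 : θ (i+1) = true := hθw (i+1) (by omega) (by omega)
          have hθi : θ i = true := hθw i (by omega) (by omega)
          rw [if_neg (by simp [hθi1]), if_pos hθi] at h2
          rw [h2, aa_seed S c (by omega) (by omega)]
        rw [hsh, Finset.sum_congr rfl hmid, Finset.sum_add_distrib, Finset.sum_add_distrib] at hcl
        -- seed values
        have hA : aa S c (p+(n:ℤ)) = seedA c p (p+(n:ℤ)) := aa_seed S c (by omega) (by omega)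
        have hB : bb S c (p+(n:ℤ)) = seedB c n p (p+(n:ℤ)) := bb_seed S c (by omega) (by omega)
        have hbbmid : ∀ w ∈ Icc (p+1) (p+(n:ℤ)-1), bb S c w = seedB c n p w := by
          intro w hw; simp only [mem_Icc] at hw
          exact bb_seed S c (by omega) (by omega)
        rw [Finset.sum_congr rfl hbbmid] at hcl
        -- assemble
        have hKb : Kb c n p = (c p).1 + (∑ w ∈ Icc (p+1) (p+(n:ℤ)-1), (c w).1 + (c (p+(n:ℤ))).1)
            + (c (p+(n:ℤ)+1)).1 := by
          rw [Kb, sum_Icc_top (fun w => (c w).1) (show p+1 ≤ p+(n:ℤ) by omega),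
            show p+(n:ℤ)-1 = p+(n:ℤ)-1 by ring]
        have hSB : (∑ w ∈ Icc (p+1) (p+(n:ℤ)-1), seedB c n p w) + seedB c n p (p+(n:ℤ))
            = Kb c n p := by
          rw [← sum_Icc_top (seedB c n p) (show p+1 ≤ p+(n:ℤ) by omega)]
          exact sum_seedB c S.hn
        have hSA : (∑ w ∈ Icc (p+1) (p+(n:ℤ)-1), seedA c p w) + seedA c p (p+(n:ℤ))
            = (c p).1 := by
          rw [← sum_Icc_top (seedA c p) (show p+1 ≤ p+(n:ℤ) by omega)]
          exact sum_seedA c S.hn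
        rw [hKb] at hSB
        -- final char-2 algebra
        rw [show p+(n:ℤ)+(n:ℤ)+1 = p+(n:ℤ)+(n:ℤ)+1 by ring] at hcl
        rw [hA, hB]
        have key : ∀ A1 Cu SCm SBm SAm sA sB Ct Cp : ZMod 2,
            A1 = Cu + (SCm + SBm + SAm) →
            SBm + sB = Cp + (SCm + Ct) + Cu →
            SAm + sA = Cp →
            sA + A1 + sB = Ct := by decide
        exact key _ _ _ _ _ _ _ _ _ hcl hSB hSA
      · -- ordinary run-end on the right
        have hns : x ≤ s + (n:ℤ) - 2 := by omega
        have hθs : θ s = true := hθw s le_rfl (by omega)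
        have hy := aa_up S c (y := s+(n:ℤ)) (by omega)
        unfold stepU at hy
        rw [show s+(n:ℤ)-(n:ℤ) = s by ring] at hy
        rw [if_neg (by simp [hθs]), if_neg (by simp [hsF]), hre,
          if_neg (by omega : ¬ x = s+(n:ℤ)-1)] at hy
        have hcl := aa_up S c (y := x+(n:ℤ)+1) (by omega)
        unfold stepU at hcl
        rw [show x+(n:ℤ)+1-(n:ℤ) = x+1 by ring] at hcl
        rw [if_pos hθ1, show x+1+1 = x+2 by ring, show x+(n:ℤ)+1-1 = x+(n:ℤ) by ring] at hcl
        have helts : ∀ z ∈ (Icc (x+2) (x+(n:ℤ))).erase (s+(n:ℤ)),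
            (if z < s+(n:ℤ) then aa S c z
             else (c (z-(n:ℤ)-1)).1 + bb S c (z-(n:ℤ)-1) + aa S c (z-(n:ℤ)-1))
              = aa S c z := by
          intro z hz
          simp only [Finset.mem_erase, mem_Icc] at hz
          by_cases h : z < s+(n:ℤ)
          · rw [if_pos h]
          · rw [if_neg h]
            have h2 := aa_up S c (y := z) (by omega)
            unfold stepU at h2
            have hth1 : θ (z-(n:ℤ)) = true := hθw (z-(n:ℤ)) (by omega) (by omega)
            have hth2 : θ (z-(n:ℤ)-1) = true := hθw (z-(n:ℤ)-1) (by omega) (by omega)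
            rw [if_neg (by simp [hth1]), if_pos hth2] at h2
            exact h2.symm
        rw [Finset.sum_congr rfl helts] at hy
        have hmem : s+(n:ℤ) ∈ Icc (x+2) (x+(n:ℤ)) := by simp only [mem_Icc]; omega
        rw [← Finset.add_sum_erase _ _ hmem] at hcl
        have key : ∀ A B C D Se X Y : ZMod 2,
            Y = C + B + X + D + Se → A = D + (Y + Se) → X + A + B = C := by decide
        exact key _ _ _ _ _ _ _ hy hcl

/-- main surjectivity statement, given a Setup -/
lemma main_surj (x : ℤ) :
    gdRule n θ (fun y => (aa S c y, bb S c y)) x = c x := by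
  have hn1 : (1:ℤ) ≤ (n:ℤ) := by exact_mod_cast S.hn
  unfold gdRule
  have h2 : ∑ i ∈ Icc (1:ℤ) ((n:ℤ)+1), bb S c (x + i) = (c x).2 := by
    have := E1 S c x
    rw [← this, show x + 1 = x + 1 by rfl]
    rw [show (Icc (x+1) (x+(n:ℤ)+1)) = Icc (x+1) (x+((n:ℤ)+1)) by ring_nf]
    rw [sum_shift (bb S c) x 1 ((n:ℤ)+1)]
  rcases Bool.eq_false_or_eq_true (θ x) with hθx | hθx
  · -- γ cell
    rw [if_pos hθx]
    have h1 := E3 S c x hθx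
    exact Prod.ext (by simpa using h1) (by simpa using h2)
  · -- δ cell
    rw [if_neg (by simp [hθx])]
    have h1 := E2 S c x hθx
    have h1' : ∑ i ∈ Icc (1:ℤ) (n:ℤ), aa S c (x + i) = (c x).1 := by
      rw [← h1, sum_shift (aa S c) x 1 (n:ℤ)]
    exact Prod.ext (by simpa using h1') (by simpa using h2)

end Stmt14Aux


/-- if `θ` has at most one block of `n` consecutive γ-cells (any two
starting positions of such blocks coincide), then the global update rule `H_θ` is
surjective. -/
theorem stmt_14 (n : ℕ) (hn : 1 ≤ n) (θ : ℤ → Bool)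
    (hone : ∀ x y : ℤ, (∀ i : ℤ, 0 ≤ i → i < n → θ (x + i) = true) →
      (∀ i : ℤ, 0 ≤ i → i < n → θ (y + i) = true) → x = y) :
    Function.Surjective (gdRule n θ) := by
  intro c
  obtain ⟨p, S⟩ : ∃ p : ℤ, Stmt14Aux.Setup n θ p := by
    by_cases h : ∃ z : ℤ, ∀ i : ℤ, 0 ≤ i → i < (n:ℤ) → θ (z + i) = true
    · obtain ⟨z, hz⟩ := h
      refine ⟨z - 1, hn, ?_, fun w hw => by have := hone w z hw hz; omega⟩
      rcases Bool.eq_false_or_eq_true (θ (z-1)) with h1 | h1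
      · exfalso
        have hblk : ∀ i : ℤ, 0 ≤ i → i < (n:ℤ) → θ (z - 1 + i) = true := by
          intro i h0 hi
          rcases eq_or_lt_of_le h0 with he | hlt
          · rwa [← he, add_zero]
          · rw [show z - 1 + i = z + (i - 1) by ring]
            exact hz (i-1) (by omega) (by omega)
        have := hone (z-1) z hblk hz
        omega
      · exact h1
    · push_neg at h
      obtain ⟨i, h0, hi, hfi⟩ := h 0
      refine ⟨0 + i, hn, by simpa using hfi, fun w hw => ?_⟩
      obtain ⟨j, hj0, hjn, hjf⟩ := h w
      exact absurd (hw j hj0 hjn) hjf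
  exact ⟨fun y => (Stmt14Aux.aa S c y, Stmt14Aux.bb S c y),
    funext (fun x => Stmt14Aux.main_surj (S := S) (c := c) x)⟩
end

section
/- Let τ ∈ T^ℤ be a non-recurrent rule distribution template. Then there exists a finite set of local rules R and an assignment α : T → R such that H_{τ_α} is surjective but not pre-injective. -/
/-- A configuration `τ` over ℤ is non-recurrent if some finite pattern of `τ` occurs
exactly once: there are `i ≤ j` such that the only translate of `τ|_{[i,j]}` occurring
in `τ` is the trivial one. -/
def NonRecurrent {T : Type} (τ : ℤ → T) : Prop :=
  ∃ i j : ℤ, i ≤ j ∧ ∀ t : ℤ, (∀ x ∈ Finset.Icc i j, τ (x + t) = τ x) → t = 0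

open scoped Classical

namespace Stmt16Aux

variable {T : Type} (τ : ℤ → T) (i j : ℤ) (q : ℕ)

noncomputable abbrev Cset (i j : ℤ) : Finset ℤ := Finset.Icc 1 (j - i)

abbrev St (T : Type) (i j : ℤ) (q : ℕ) : Type :=
  T × ZMod q × ZMod q × ({ c // c ∈ Cset i j } → ZMod q)

/-- the local rule, as a function of the "local configuration" `f : ℤ → St` (offset-indexed). -/
noncomputable def ruleF (t : T) (f : ℤ → St T i j q) : St T i j q :=
  ⟨(f 0).1,
   if t = τ i ∧ ∀ k ∈ Finset.Icc (0:ℤ) (j-i), (f k).1 = τ (i+k) then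
     (∑ c ∈ (Cset i j).attach, (f ((c:ℤ)+1)).2.2.2 c) + (f 0).2.2.1
   else (f 1).2.1,
   (f 0).2.2.1 + (f 1).2.2.1,
   fun c => if (f 0).1 ≠ t ∧ ∀ k ∈ Finset.Icc (0:ℤ) (j-i), (f (k - (c:ℤ))).1 = τ (i+k) then
     (f (1 - (c:ℤ))).2.1 + (f 1).2.2.2 c
   else (f 1).2.2.2 c⟩

def mm (i j : ℤ) : ℕ := (2*(j-i)+5).toNat + 1

def NN (i j : ℤ) : Fin (mm i j) → ℤ := fun k => (k : ℤ) - (j-i+2)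

noncomputable def rd (ω : Fin (mm i j) → St T i j q) (o : ℤ) : St T i j q :=
  ω ⟨(o + (j-i+2)).toNat % mm i j, Nat.mod_lt _ (Nat.succ_pos _)⟩

noncomputable def alpha (t : T) (ω : Fin (mm i j) → St T i j q) : St T i j q :=
  ruleF τ i j q t (rd i j q ω)

lemma rd_window (cfg : ℤ → St T i j q) (x o : ℤ) (h1 : -(j-i+2) ≤ o) (h2 : o ≤ j-i+2) :
    rd i j q (fun k => cfg (x + NN i j k)) o = cfg (x + o) := by
  have hlt : (o + (j-i+2)).toNat < mm i j := by unfold mm; omega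
  simp only [rd, NN, Nat.mod_eq_of_lt hlt]
  congr 1
  omega

lemma ruleF_congr (hij : i ≤ j) (t : T) (f f' : ℤ → St T i j q)
    (h : ∀ o, -(j-i+2) ≤ o → o ≤ j-i+2 → f o = f' o) :
    ruleF τ i j q t f = ruleF τ i j q t f' := by
  have h0 : f 0 = f' 0 := h 0 (by omega) (by omega)
  have h1 : f 1 = f' 1 := h 1 (by omega) (by omega)
  have hIcc : ∀ k ∈ Finset.Icc (0:ℤ) (j-i), f k = f' k := by
    intro k hk
    rw [Finset.mem_Icc] at hk
    exact h k (by omega) (by omega)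
  have hC : ∀ c : {c // c ∈ Cset i j}, (1:ℤ) ≤ (c:ℤ) ∧ (c:ℤ) ≤ j - i := by
    intro c
    have := c.2
    rw [Finset.mem_Icc] at this
    exact this
  unfold ruleF
  refine Prod.ext (by rw [h0]) (Prod.ext ?_ (Prod.ext (by rw [h0, h1]) ?_))
  · simp only
    refine if_congr (and_congr Iff.rfl ?_) ?_ (by rw [h1])
    · exact forall₂_congr fun k hk => by rw [hIcc k hk]
    · refine congrArg₂ _ (Finset.sum_congr rfl fun c _ => ?_) (by rw [h0])
      have hc := hC c
      rw [h ((c:ℤ)+1) (by omega) (by omega)]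
  · simp only
    funext c
    have hc := hC c
    refine if_congr (and_congr (by rw [h0]) ?_) ?_ (by rw [h1])
    · refine forall₂_congr fun k hk => ?_
      rw [Finset.mem_Icc] at hk
      rw [h (k - (c:ℤ)) (by omega) (by omega)]
    · rw [h (1 - (c:ℤ)) (by omega) (by omega), h1]

lemma Heval (hij : i ≤ j) (cfg : ℤ → St T i j q) (x : ℤ) :
    alpha τ i j q (τ x) (fun k => cfg (x + NN i j k)) =
      ruleF τ i j q (τ x) (fun o => cfg (x + o)) := by
  unfold alpha
  exact ruleF_congr τ i j q hij _ _ _ fun o ho1 ho2 => rd_window i j q cfg x o ho1 ho2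



/-- "the guess track of `e` shows an (eraser-)activating pattern at `y`" -/
def Ep (e : ℤ → St T i j q) (y : ℤ) : Prop :=
  τ y = τ i ∧ ∀ k ∈ Finset.Icc (0:ℤ) (j-i), (e (y+k)).1 = τ (i+k)

/-- "cell `z` is an (active) donor at distance `c`" -/
def Dp (e : ℤ → St T i j q) (z : ℤ) (c : { c // c ∈ Cset i j }) : Prop :=
  (e z).1 ≠ τ z ∧ ∀ k ∈ Finset.Icc (0:ℤ) (j-i), (e (z + (k - (c:ℤ)))).1 = τ (i+k)

noncomputable def Kk (e : ℤ → St T i j q) (y : ℤ) : ℕ :=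
  ((Cset i j).attach.filter (fun c => Dp τ i j q e (y + c.1) c)).card

noncomputable def rho (e : ℤ → St T i j q) : ZMod q :=
  if Ep τ i j q e i ∧ Kk τ i j q e i = 0 then
    (e i).2.1 - ∑ c ∈ (Cset i j).attach, (e (i+(c:ℤ))).2.2.2 c
  else 0

noncomputable def fwd (e : ℤ → St T i j q) : ℕ → ZMod q
  | 0 => rho τ i j q e
  | (k+1) => (e (i + (k:ℤ))).2.2.1 - fwd e k

noncomputable def bwd (e : ℤ → St T i j q) : ℕ → ZMod q
  | 0 => rho τ i j q e
  | (k+1) => (e (i - ((k:ℤ)+1))).2.2.1 - bwd e k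

noncomputable def ww (e : ℤ → St T i j q) (z : ℤ) : ZMod q :=
  if i ≤ z then fwd τ i j q e (z-i).toNat else bwd τ i j q e (i-z).toNat

noncomputable def uu (e : ℤ → St T i j q) (s : ℤ) : ZMod q :=
  if Ep τ i j q e (s-1) then
    (if Kk τ i j q e (s-1) = 0 then 0 else
      ((Kk τ i j q e (s-1) : ZMod q))⁻¹ *
        ((∑ c ∈ (Cset i j).attach, (e ((s-1)+(c:ℤ))).2.2.2 c) + ww τ i j q e (s-1) - (e (s-1)).2.1))
  else (e (s-1)).2.1

noncomputable def vv (e : ℤ → St T i j q) (s : ℤ) (c : { c // c ∈ Cset i j }) : ZMod q :=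
  (e (s-1)).2.2.2 c - (if Dp τ i j q e (s-1) c then uu τ i j q e (s - (c:ℤ)) else 0)

noncomputable def sol (e : ℤ → St T i j q) (x : ℤ) : St T i j q :=
  ⟨(e x).1, uu τ i j q e x, ww τ i j q e x, fun c => vv τ i j q e x c⟩

lemma ww_link (e : ℤ → St T i j q) (z : ℤ) :
    ww τ i j q e z + ww τ i j q e (z+1) = (e z).2.2.1 := by
  by_cases h : i ≤ z
  · have h1 : i ≤ z + 1 := by omega
    rw [ww, if_pos h, ww, if_pos h1]
    have h2 : (z+1-i).toNat = (z-i).toNat + 1 := by omega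
    rw [h2]
    have h3 : fwd τ i j q e ((z-i).toNat + 1)
        = (e (i + ((z-i).toNat : ℤ))).2.2.1 - fwd τ i j q e (z-i).toNat := rfl
    have h4 : i + ((z-i).toNat : ℤ) = z := by omega
    rw [h4] at h3
    rw [h3]; ring
  · have hz : z < i := by omega
    rw [ww, if_neg h]
    by_cases h1 : z + 1 = i
    · rw [ww, if_pos (by omega)]
      have h2 : (z+1-i).toNat = 0 := by omega
      have h3 : (i-z).toNat = 1 := by omega
      rw [h2, h3]
      have h4 : fwd τ i j q e 0 = rho τ i j q e := rfl
      have h5 : bwd τ i j q e 1 = (e (i - ((0:ℕ)+1 : ℤ))).2.2.1 - bwd τ i j q e 0 := rfl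
      have h6 : i - ((0:ℕ)+1 : ℤ) = z := by push_cast; omega
      have h7 : bwd τ i j q e 0 = rho τ i j q e := rfl
      rw [h4, h5, h6, h7]; ring
    · rw [ww, if_neg (by omega)]
      have h2 : (i-z).toNat = (i-(z+1)).toNat + 1 := by omega
      rw [h2]
      have h3 : bwd τ i j q e ((i-(z+1)).toNat + 1)
          = (e (i - (((i-(z+1)).toNat : ℤ)+1))).2.2.1 - bwd τ i j q e (i-(z+1)).toNat := rfl
      have h4 : i - (((i-(z+1)).toNat : ℤ)+1) = z := by omega
      rw [h4] at h3
      rw [h3]; ring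

lemma keyUnique (huniq : ∀ t : ℤ, (∀ x ∈ Finset.Icc i j, τ (x + t) = τ x) → t = 0)
    (e : ℤ → St T i j q) (y : ℤ) (hE : Ep τ i j q e y) (hK : Kk τ i j q e y = 0) :
    y = i := by
  have hfin := huniq (y - i) ?_
  · omega
  · intro m hm
    rw [Finset.mem_Icc] at hm
    have hkIcc : m - i ∈ Finset.Icc (0:ℤ) (j-i) := Finset.mem_Icc.mpr ⟨by omega, by omega⟩
    have he1 : (e (y+(m-i))).1 = τ (i+(m-i)) := hE.2 (m-i) hkIcc
    have he2 : (e (y+(m-i))).1 = τ (y+(m-i)) := by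
      rcases eq_or_lt_of_le (show (0:ℤ) ≤ m - i by omega) with h0 | hpos
      · have := hE.2 0 (Finset.mem_Icc.mpr ⟨le_refl _, by omega⟩)
        rw [← h0]
        rw [show y + (0:ℤ) = y by ring] at this ⊢
        rw [this, add_zero]
        exact hE.1.symm
      · have hcmem : m - i ∈ Cset i j := Finset.mem_Icc.mpr ⟨by omega, by omega⟩
        set c : {c // c ∈ Cset i j} := ⟨m - i, hcmem⟩ with hc
        have hnotD : ¬ Dp τ i j q e (y + (c:ℤ)) c := by
          intro hD
          have hmemf : c ∈ (Cset i j).attach.filter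
              (fun c => Dp τ i j q e (y + c.1) c) :=
            Finset.mem_filter.mpr ⟨Finset.mem_attach _ _, hD⟩
          have : (Cset i j).attach.filter (fun c => Dp τ i j q e (y + c.1) c) = ∅ :=
            Finset.card_eq_zero.mp hK
          rw [this] at hmemf
          exact absurd hmemf (Finset.notMem_empty _)
        by_contra hne
        apply hnotD
        constructor
        · exact fun hh => hne hh
        · intro k' hk'
          have harg : (y + (c:ℤ)) + (k' - (c:ℤ)) = y + k' := by ring
          rw [harg]
          exact hE.2 k' hk'
    have harg1 : m + (y - i) = y + (m - i) := by ring
    have harg2 : i + (m - i) = m := by ring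
    calc τ (m + (y-i)) = τ (y + (m-i)) := by rw [harg1]
      _ = (e (y+(m-i))).1 := he2.symm
      _ = τ (i + (m-i)) := he1
      _ = τ m := by rw [harg2]

lemma solSpec (hij : i ≤ j)
    (huniq : ∀ t : ℤ, (∀ x ∈ Finset.Icc i j, τ (x + t) = τ x) → t = 0)
    [Fact (Nat.Prime q)] (hq : (j-i).toNat + 2 ≤ q)
    (e : ℤ → St T i j q) (x : ℤ) :
    ruleF τ i j q (τ x) (fun o => sol τ i j q e (x+o)) = e x := by
  have hsu : ∀ y, (sol τ i j q e y).2.1 = uu τ i j q e y := fun _ => rfl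
  have hsw : ∀ y, (sol τ i j q e y).2.2.1 = ww τ i j q e y := fun _ => rfl
  have hsv : ∀ y c, (sol τ i j q e y).2.2.2 c = vv τ i j q e y c := fun _ _ => rfl
  have hex : e x = ((e x).1, (e x).2.1, (e x).2.2.1, (e x).2.2.2) := rfl
  rw [hex]
  simp only [ruleF, Prod.mk.injEq, add_zero]
  refine ⟨rfl, ?_, ?_, ?_⟩
  · -- the u-component
    have hcond2 : (τ x = τ i ∧ ∀ k ∈ Finset.Icc (0:ℤ) (j-i),
        (sol τ i j q e (x+k)).1 = τ (i+k)) ↔ Ep τ i j q e x := Iff.rfl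
    simp only [hcond2]
    by_cases hE : Ep τ i j q e x
    · rw [if_pos hE]
      have hsum : ∀ c ∈ (Cset i j).attach,
          (sol τ i j q e (x+((c:ℤ)+1))).2.2.2 c
            = (e (x+(c:ℤ))).2.2.2 c
              - (if Dp τ i j q e (x+(c:ℤ)) c then uu τ i j q e (x+1) else 0) := by
        intro c _
        rw [hsv, vv]
        have h1 : x+((c:ℤ)+1) - 1 = x + (c:ℤ) := by ring
        have h2 : x+((c:ℤ)+1) - (c:ℤ) = x + 1 := by ring
        rw [h1, h2]
      rw [Finset.sum_congr rfl hsum, Finset.sum_sub_distrib]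
      rw [Finset.sum_ite, Finset.sum_const, Finset.sum_const_zero, add_zero]
      rw [hsw]
      have hKdef : ((Cset i j).attach.filter (fun c => Dp τ i j q e (x + c.1) c)).card
          = Kk τ i j q e x := rfl
      by_cases hK : Kk τ i j q e x = 0
      · have hxi : x = i := keyUnique τ i j q huniq e x hE hK
        rw [hKdef, hK, zero_nsmul, sub_zero, hxi]
        rw [hxi] at hE hK
        have hwi : ww τ i j q e i = rho τ i j q e := by
          rw [ww, if_pos (le_refl i)]
          have h0 : (i - i).toNat = 0 := by omega
          rw [h0]
          rfl
        rw [hwi, rho, if_pos ⟨hE, hK⟩]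
        ring
      · have hKle : Kk τ i j q e x ≤ (j-i).toNat := by
          have h1 : Kk τ i j q e x ≤ (Cset i j).attach.card := Finset.card_filter_le _ _
          rw [Finset.card_attach] at h1
          have h2 : (Cset i j).card = (j - i + 1 - 1).toNat := Int.card_Icc 1 (j-i)
          omega
        have hKF : ((Kk τ i j q e x : ℕ) : ZMod q) ≠ 0 := by
          rw [Ne, CharP.cast_eq_zero_iff (ZMod q) q]
          intro hdvd
          have hp : 0 < Kk τ i j q e x := Nat.pos_of_ne_zero hK
          have := Nat.le_of_dvd hp hdvd
          have := (Fact.out : Nat.Prime q).two_le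
          omega
        have hux : uu τ i j q e (x+1)
            = ((Kk τ i j q e x : ZMod q))⁻¹ *
              ((∑ c ∈ (Cset i j).attach, (e (x+(c:ℤ))).2.2.2 c)
                + ww τ i j q e x - (e x).2.1) := by
          rw [uu]
          have h1 : x + 1 - 1 = x := by ring
          rw [h1, if_pos hE, if_neg hK]
        rw [hKdef, hux, nsmul_eq_mul, ← mul_assoc, mul_inv_cancel₀ hKF, one_mul]
        ring
    · rw [if_neg hE, hsu, uu]
      have h1 : x + 1 - 1 = x := by ring
      rw [h1, if_neg hE]
  · -- the w-component
    rw [hsw, hsw]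
    exact ww_link τ i j q e x
  · -- the v-components
    funext c
    have hcond4 : ((sol τ i j q e x).1 ≠ τ x ∧ ∀ k ∈ Finset.Icc (0:ℤ) (j-i),
        (sol τ i j q e (x+(k - (c:ℤ)))).1 = τ (i+k)) ↔ Dp τ i j q e x c := Iff.rfl
    simp only [hcond4]
    by_cases hD : Dp τ i j q e x c
    · rw [if_pos hD, hsu, hsv, vv]
      have h1 : x + 1 - 1 = x := by ring
      rw [h1, if_pos hD]
      have h2 : x + (1 - (c:ℤ)) = x + 1 - (c:ℤ) := by ring
      rw [h2]
      ring
    · rw [if_neg hD, hsv, vv]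
      have h1 : x + 1 - 1 = x := by ring
      rw [h1, if_neg hD, sub_zero]



noncomputable def c0 : ℤ → St T i j q := fun x => ⟨τ x, 0, 0, fun _ => 0⟩

noncomputable def c1 : ℤ → St T i j q :=
  fun x => ⟨τ x, if x = i+1 then 1 else 0, 0, fun _ => 0⟩

lemma preInjFailEq (x : ℤ) :
    ruleF τ i j q (τ x) (fun o => c0 τ i j q (x+o)) =
      ruleF τ i j q (τ x) (fun o => c1 τ i j q (x+o)) := by
  simp only [ruleF, add_zero]
  have hic0 : (τ x = τ i ∧ ∀ k ∈ Finset.Icc (0:ℤ) (j-i), (c0 τ i j q (x+k)).1 = τ (i+k))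
      ↔ (τ x = τ i ∧ ∀ k ∈ Finset.Icc (0:ℤ) (j-i), τ (x+k) = τ (i+k)) := Iff.rfl
  have hic1 : (τ x = τ i ∧ ∀ k ∈ Finset.Icc (0:ℤ) (j-i), (c1 τ i j q (x+k)).1 = τ (i+k))
      ↔ (τ x = τ i ∧ ∀ k ∈ Finset.Icc (0:ℤ) (j-i), τ (x+k) = τ (i+k)) := Iff.rfl
  simp only [hic0, hic1]
  refine Prod.ext rfl (Prod.ext ?_ (Prod.ext rfl ?_))
  · simp only
    by_cases hc : τ x = τ i ∧ ∀ k ∈ Finset.Icc (0:ℤ) (j-i), τ (x+k) = τ (i+k)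
    · rw [if_pos hc, if_pos hc]
      exact congrArg₂ (· + ·) (Finset.sum_congr rfl fun c _ => rfl) rfl
    · rw [if_neg hc, if_neg hc]
      have hxi : x ≠ i := by
        intro h
        exact hc ⟨by rw [h], fun k _ => by rw [h]⟩
      show (0:ZMod q) = if x+1 = i+1 then 1 else 0
      rw [if_neg (by omega)]
  · simp only
    funext c
    rw [if_neg (fun h => h.1 rfl), if_neg (fun h => h.1 rfl)]
    rfl

end Stmt16Aux


/-- for any non-recurrent rule distribution template `τ` over a finite
template set `T`, there is a finite state set `S`, a neighbourhood `N : Fin m → ℤ`, and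
an assignment `α` of local rules to templates such that the global rule of the NUCA
with rule distribution `τ_α = α ∘ τ` is surjective but not pre-injective. -/
theorem stmt_16 {T : Type} [Fintype T] (τ : ℤ → T) (hτ : NonRecurrent τ) :
    ∃ (S : Type) (_ : Fintype S) (m : ℕ) (N : Fin m → ℤ)
      (α : T → ((Fin m → S) → S)),
      Function.Surjective
          (fun (c : ℤ → S) (x : ℤ) => α (τ x) (fun i => c (x + N i))) ∧
      ¬ PreInjective (fun (c : ℤ → S) (x : ℤ) => α (τ x) (fun i => c (x + N i))) := by
  obtain ⟨i, j, hij, huniq⟩ := hτ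
  obtain ⟨q, hqle, hqp⟩ := Nat.exists_infinite_primes ((j-i).toNat + 2)
  haveI : Fact (Nat.Prime q) := ⟨hqp⟩
  haveI : NeZero q := ⟨hqp.ne_zero⟩
  haveI : Fact (1 < q) := ⟨hqp.one_lt⟩
  refine ⟨Stmt16Aux.St T i j q, inferInstance, Stmt16Aux.mm i j, Stmt16Aux.NN i j,
    Stmt16Aux.alpha τ i j q, ?_, ?_⟩
  · intro e
    refine ⟨Stmt16Aux.sol τ i j q e, ?_⟩
    funext x
    show Stmt16Aux.alpha τ i j q (τ x)
        (fun k => Stmt16Aux.sol τ i j q e (x + Stmt16Aux.NN i j k)) = e x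
    rw [Stmt16Aux.Heval τ i j q hij]
    exact Stmt16Aux.solSpec τ i j q hij huniq hqle e x
  · intro hPI
    have heq : (fun (c : ℤ → Stmt16Aux.St T i j q) (x : ℤ) =>
          Stmt16Aux.alpha τ i j q (τ x) (fun k => c (x + Stmt16Aux.NN i j k)))
            (Stmt16Aux.c0 τ i j q)
        = (fun (c : ℤ → Stmt16Aux.St T i j q) (x : ℤ) =>
          Stmt16Aux.alpha τ i j q (τ x) (fun k => c (x + Stmt16Aux.NN i j k)))
            (Stmt16Aux.c1 τ i j q) := by
      funext x
      show Stmt16Aux.alpha τ i j q (τ x)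
          (fun k => Stmt16Aux.c0 τ i j q (x + Stmt16Aux.NN i j k))
        = Stmt16Aux.alpha τ i j q (τ x)
          (fun k => Stmt16Aux.c1 τ i j q (x + Stmt16Aux.NN i j k))
      rw [Stmt16Aux.Heval τ i j q hij, Stmt16Aux.Heval τ i j q hij]
      exact Stmt16Aux.preInjFailEq τ i j q x
    have hfin : {x : ℤ | Stmt16Aux.c0 τ i j q x ≠ Stmt16Aux.c1 τ i j q x}.Finite := by
      apply Set.Finite.subset (Set.finite_singleton (i+1))
      intro x hx
      simp only [Set.mem_setOf_eq] at hx
      simp only [Set.mem_singleton_iff]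
      by_contra hne
      apply hx
      show (⟨τ x, 0, 0, fun _ => 0⟩ : Stmt16Aux.St T i j q)
        = ⟨τ x, if x = i+1 then 1 else 0, 0, fun _ => 0⟩
      rw [if_neg hne]
    have hceq := hPI _ _ hfin heq
    have hcontra := congrFun hceq (i+1)
    have h01 : (0 : ZMod q) = 1 := by
      have h2 := congrArg (fun p => p.2.1) hcontra
      simpa [Stmt16Aux.c0, Stmt16Aux.c1] using h2
    exact zero_ne_one h01
end

section
/- Let φ ∈ R^ℤ be a recurrent configuration (every finite pattern of φ occurs at least twice, hence infinitely often). Let i ≤ j in ℤ, and write u = φ restricted to (-∞, i), w = φ restricted to (j, ∞). Then either every finite suffix of u occurs as a subword of w, or every finite prefix of w occurs as a subword of u. -/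
/-- A configuration `θ` over ℤ is recurrent if every finite pattern occurring in it
occurs at a second, different position. -/
def Recurrent {R : Type} (θ : ℤ → R) : Prop :=
  ∀ D : Finset ℤ, ∃ t : ℤ, t ≠ 0 ∧ ∀ x ∈ D, θ (x + t) = θ x

private lemma iter_shift {R : Type} (φ : ℤ → R) (a b t : ℤ)
    (ht : ∀ x ∈ Finset.Icc a b, φ (x + t) = φ x) :
    ∀ q : ℕ, ∀ x : ℤ, (∀ s : ℕ, s < q → a ≤ x + s * t ∧ x + s * t ≤ b) →
      φ (x + q * t) = φ x := by
  intro q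
  induction q with
  | zero => intro x _; simp
  | succ q ih =>
    intro x hx
    have h1 : φ ((x + q * t) + t) = φ (x + q * t) := by
      apply ht
      rw [Finset.mem_Icc]
      exact hx q (Nat.lt_succ_self q)
    have h2 : φ (x + q * t) = φ x := ih x (fun s hs => hx s (hs.trans (Nat.lt_succ_self q)))
    have he : x + ((q : ℕ) + 1 : ℕ) * t = (x + q * t) + t := by push_cast; ring
    rw [he, h1, h2]

/-- for a recurrent configuration `φ` and `i ≤ j`, with
`u = φ|_{(-∞,i)}` and `w = φ|_{(j,∞)}`: either every finite suffix of `u`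
(the word `φ(i-n)…φ(i-1)`) occurs as a subword of `w`, or every finite prefix of
`w` (the word `φ(j+1)…φ(j+n)`) occurs as a subword of `u`. -/
theorem stmt_17 {R : Type} [Fintype R] (φ : ℤ → R) (hφ : Recurrent φ)
    (i j : ℤ) (hij : i ≤ j) :
    (∀ n : ℕ, ∃ p : ℤ, j < p ∧ ∀ k : ℕ, k < n → φ (p + k) = φ (i - n + k)) ∨
    (∀ n : ℕ, ∃ p : ℤ, p + n ≤ i ∧ ∀ k : ℕ, k < n → φ (p + k) = φ (j + 1 + k)) := by
  by_cases h : ∀ n : ℕ, ∃ p : ℤ, j < p ∧ ∀ k : ℕ, k < n → φ (p + k) = φ (i - n + k)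
  · exact Or.inl h
  · right
    push_neg at h
    obtain ⟨m, hm⟩ := h
    intro n
    obtain ⟨t, ht0, ht⟩ := hφ (Finset.Icc (i - m - n) (j + m + n))
    have hiter := iter_shift φ (i - m - n) (j + m + n) t ht
    rcases ht0.lt_or_gt with htneg | htpos
    · -- t < 0 : prove the goal
      have hP : ∃ q : ℕ, j + n + 1 - i ≤ (q : ℤ) * (-t) := by
        refine ⟨(j + n + 1 - i).toNat, ?_⟩
        have h1 : (j + n + 1 - i) ≤ ((j + n + 1 - i).toNat : ℤ) := Int.self_le_toNat _
        have h2 : (0 : ℤ) ≤ ((j + n + 1 - i).toNat : ℤ) := Int.ofNat_nonneg _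
        nlinarith
      classical
      set q := Nat.find hP with hqdef
      have hPq : j + n + 1 - i ≤ (q : ℤ) * (-t) := Nat.find_spec hP
      refine ⟨j + 1 + q * t, by linarith [hPq], fun k hk => ?_⟩
      have key : φ ((j + 1 + (k : ℤ)) + q * t) = φ (j + 1 + k) := by
        apply hiter
        intro s hs
        have hq1 : 1 ≤ q := Nat.one_le_iff_ne_zero.mpr (by
          intro h0; rw [h0] at hs; exact Nat.not_lt_zero s hs)
        have hmin : ¬ (j + n + 1 - i ≤ ((q - 1 : ℕ) : ℤ) * (-t)) :=
          Nat.find_min hP (Nat.sub_lt hq1 one_pos)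
        push_neg at hmin
        have hcast : ((q - 1 : ℕ) : ℤ) = (q : ℤ) - 1 := by
          omega
        rw [hcast] at hmin
        have hs' : (s : ℤ) ≤ (q : ℤ) - 1 := by
          have := Nat.lt_iff_add_one_le.mp hs
          exact_mod_cast by omega
        have hst : ((q : ℤ) - 1) * t ≤ (s : ℤ) * t :=
          mul_le_mul_of_nonpos_right hs' (le_of_lt htneg)
        have hkn : (k : ℤ) ≤ (n : ℤ) - 1 := by omega
        have hk0 : (0 : ℤ) ≤ (k : ℤ) := Int.ofNat_nonneg _
        have hst0 : (s : ℤ) * t ≤ 0 :=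
          mul_nonpos_of_nonneg_of_nonpos (Int.ofNat_nonneg _) (le_of_lt htneg)
        constructor
        · nlinarith
        · nlinarith
      calc φ (j + 1 + (q : ℤ) * t + (k : ℤ)) = φ ((j + 1 + (k : ℤ)) + q * t) := by ring_nf
        _ = φ (j + 1 + k) := key
    · -- t > 0 : contradiction with hm
      exfalso
      have hQ : ∃ q : ℕ, j - i + m < (q : ℤ) * t := by
        refine ⟨(j - i + m).toNat + 1, ?_⟩
        have h1 : (j - i + m) ≤ ((j - i + m).toNat : ℤ) := Int.self_le_toNat _
        have h2 : (0 : ℤ) ≤ ((j - i + m).toNat : ℤ) := Int.ofNat_nonneg _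
        push_cast
        nlinarith
      classical
      set q := Nat.find hQ with hqdef
      have hQq : j - i + m < (q : ℤ) * t := Nat.find_spec hQ
      have hq1 : 1 ≤ q := by
        rcases Nat.eq_zero_or_pos q with h0 | h1
        · exfalso
          rw [h0] at hQq
          simp at hQq
          have : (0:ℤ) ≤ j - i + m := by
            have := Int.ofNat_nonneg m; linarith
          linarith
        · exact h1
      have hmin : ¬ (j - i + m < ((q - 1 : ℕ) : ℤ) * t) := Nat.find_min hQ (Nat.sub_lt hq1 one_pos)
      push_neg at hmin
      have hcast : ((q - 1 : ℕ) : ℤ) = (q : ℤ) - 1 := by omega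
      rw [hcast] at hmin
      obtain ⟨k, hk, hne⟩ := hm (i - m + q * t) (by
        have := Int.ofNat_nonneg m; linarith)
      apply hne
      have key : φ ((i - (m : ℤ) + (k : ℤ)) + q * t) = φ (i - m + k) := by
        apply hiter
        intro s hs
        have hs' : (s : ℤ) ≤ (q : ℤ) - 1 := by exact_mod_cast by omega
        have hst : (s : ℤ) * t ≤ ((q : ℤ) - 1) * t :=
          mul_le_mul_of_nonneg_right hs' (le_of_lt htpos)
        have hst0 : (0 : ℤ) ≤ (s : ℤ) * t :=
          mul_nonneg (Int.ofNat_nonneg _) (le_of_lt htpos)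
        have hkm : (k : ℤ) ≤ (m : ℤ) - 1 := by omega
        have hk0 : (0 : ℤ) ≤ (k : ℤ) := Int.ofNat_nonneg _
        have hn0 : (0 : ℤ) ≤ (n : ℤ) := Int.ofNat_nonneg _
        constructor
        · linarith
        · linarith
      calc φ (i - (m : ℤ) + (q : ℤ) * t + (k : ℤ))
          = φ ((i - (m : ℤ) + (k : ℤ)) + q * t) := by ring_nf
        _ = φ (i - m + k) := key
end

section
/- Let θ ∈ R^ℤ be a rule distribution and i ≤ j integers such that, with u = θ|_{(-∞,i)} and w = θ|_{(j,∞)}, either every finite suffix of u is a subword of w or every finite prefix of w is a subword of u. Then if the NUCA global update rule H_θ is injective, it is surjective. -/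
private lemma aux_per {S : Type} {f : ℤ → S} {T : ℤ} (h : ∀ x, f (x + T) = f x) :
    ∀ (k x : ℤ), f (x + k * T) = f x := by
  intro k
  induction k using Int.induction_on with
  | zero => simp
  | succ n ih =>
      intro x
      have h1 := h (x + (n : ℤ) * T)
      have e : x + ((n : ℤ) + 1) * T = x + (n : ℤ) * T + T := by ring
      rw [e, h1, ih x]
  | pred n ih =>
      intro x
      have h1 := h (x + (-(n : ℤ) - 1) * T)
      have e1 : x + (-(n : ℤ) - 1) * T + T = x + (-(n : ℤ)) * T := by ring
      rw [e1] at h1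
      rw [← h1]
      exact ih x

private lemma aux_choose {β : Type} [Finite β] (U : Ultrafilter ℕ) (f : ℕ → β) :
    ∃ v : β, {L : ℕ | f L = v} ∈ U := by
  by_contra h
  push_neg at h
  have h2 : ∀ v : β, {L : ℕ | f L = v}ᶜ ∈ U := fun v =>
    (Ultrafilter.compl_mem_iff_notMem).mpr (h v)
  have h3 : (⋂ v : β, {L : ℕ | f L = v}ᶜ) ∈ U := Filter.iInter_mem.mpr h2
  obtain ⟨L, hL⟩ := Filter.nonempty_of_mem h3
  simp only [Set.mem_iInter, Set.mem_compl_iff, Set.mem_setOf_eq] at hL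
  exact hL (f L) rfl

private lemma aux_finite_per {S : Type} [Fintype S] {T : ℤ} (hT : 0 < T) :
    Finite {f : ℤ → S // ∀ x, f (x + T) = f x} := by
  have key : ∀ (f : {f : ℤ → S // ∀ x, f (x + T) = f x}) (x : ℤ), f.1 x = f.1 (x % T) := by
    intro f x
    have h1 := aux_per f.2 (x / T) (x % T)
    have h2 : x % T + x / T * T = x := by
      rw [Int.mul_comm]; exact Int.emod_add_mul_ediv x T
    rw [h2] at h1
    exact h1
  apply Finite.of_injective (fun f : {f : ℤ → S // ∀ x, f (x + T) = f x} =>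
    (fun t : Fin T.toNat => f.1 ((t : ℕ) : ℤ)))
  intro f g hfg
  apply Subtype.ext
  funext x
  have hmn : 0 ≤ x % T := Int.emod_nonneg x (ne_of_gt hT)
  have hml : x % T < T := Int.emod_lt_of_pos x hT
  have hlt : (x % T).toNat < T.toNat := by omega
  have h5 := congrFun hfg ⟨(x % T).toNat, hlt⟩
  simp only at h5
  have hcast : (((x % T).toNat : ℕ) : ℤ) = x % T := Int.toNat_of_nonneg hmn
  rw [key f x, key g x, ← hcast]
  exact h5

private lemma aux_wrap {S : Type} {m : ℕ} (θ : ℤ → ((Fin m → S) → S)) (B T : ℤ) (n : ℕ)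
    (hT : (n : ℤ) + 1 ≤ T)
    (hocc : ∀ k : ℕ, k < n → θ (B + T + k) = θ (B + k)) :
    ∃ θ' : ℤ → ((Fin m → S) → S),
      (∀ x, θ' (x + T) = θ' x) ∧
      (∀ x : ℤ, B ≤ x → x ≤ B + T + n - 1 → θ' x = θ x) := by
  refine ⟨fun x => θ (B + (x - B) % T), ?_, ?_⟩
  · intro x
    show θ (B + (x + T - B) % T) = θ (B + (x - B) % T)
    have e : x + T - B = x - B + T * 1 := by ring
    rw [e, Int.add_mul_emod_self_left]
  · intro x h1 h2
    show θ (B + (x - B) % T) = θ x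
    rcases lt_or_ge x (B + T) with hx | hx
    · have hm : (x - B) % T = x - B := Int.emod_eq_of_lt (by omega) (by omega)
      rw [hm, show B + (x - B) = x by ring]
    · have e3 : x - B = x - B - T + T * 1 := by ring
      have hm0 : (x - B - T) % T = x - B - T := Int.emod_eq_of_lt (by omega) (by omega)
      have hm : (x - B) % T = x - B - T := by
        conv_lhs => rw [e3]
        rw [Int.add_mul_emod_self_left, hm0]
      rw [hm]
      have hk : x - T - B = ((x - T - B).toNat : ℤ) := (Int.toNat_of_nonneg (by omega)).symm
      have hkn : (x - T - B).toNat < n := by omega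
      have h6 := hocc (x - T - B).toNat hkn
      rw [← hk] at h6
      have e4 : B + T + (x - T - B) = x := by ring
      have e5 : B + (x - B - T) = B + (x - T - B) := by ring
      rw [e5, ← h6, e4]


/-- let `θ` be a rule distribution over ℤ and `i ≤ j` such that, with
`u = θ|_{(-∞,i)}` and `w = θ|_{(j,∞)}`, either every finite suffix of `u` is a subword
of `w`, or every finite prefix of `w` is a subword of `u`. Then if the NUCA global
update rule `H_θ` is injective, it is surjective. -/
theorem stmt_18 {S : Type} [Fintype S] [Nonempty S] {m : ℕ}
    (N : Fin m → ℤ) (θ : ℤ → ((Fin m → S) → S)) (i j : ℤ) (hij : i ≤ j)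
    (hsub :
      (∀ n : ℕ, ∃ p : ℤ, j < p ∧ ∀ k : ℕ, k < n → θ (p + k) = θ (i - n + k)) ∨
      (∀ n : ℕ, ∃ p : ℤ, p + n ≤ i ∧ ∀ k : ℕ, k < n → θ (p + k) = θ (j + 1 + k)))
    (H : (ℤ → S) → (ℤ → S))
    (hH : H = fun c x => θ x (fun i' => c (x + N i')))
    (hinj : Function.Injective H) :
    Function.Surjective H := by
  subst hH
  intro c0
  by_contra hc
  push_neg at hc
  obtain ⟨r', hrN⟩ : ∃ r' : ℕ, ∀ i' : Fin m, (N i').natAbs ≤ r' :=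
    ⟨Finset.univ.sup (fun i' : Fin m => (N i').natAbs), fun i' =>
      Finset.le_sup (f := fun i'' : Fin m => (N i'').natAbs) (Finset.mem_univ i')⟩
  set U : Ultrafilter ℕ := Filter.hyperfilter ℕ with hU
  have hUcof : ∀ {s : Set ℕ}, s ∈ Filter.cofinite → s ∈ U := fun hs =>
    Filter.hyperfilter_le_cofinite hs
  have hUtail : ∀ K : ℕ, {L : ℕ | K ≤ L} ∈ U := by
    intro K
    apply hUcof
    rw [Filter.mem_cofinite]
    have he : {L : ℕ | K ≤ L}ᶜ = Set.Iio K := by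
      ext L; simp [Set.mem_Iio, not_le]
    rw [he]; exact Set.finite_Iio K
  -- Step 1 : orphan window
  have horph : ∃ M₀ : ℕ, ∀ e : ℤ → S, ∃ x : ℤ,
      x.natAbs ≤ M₀ ∧ θ x (fun i' => e (x + N i')) ≠ c0 x := by
    by_contra h
    push_neg at h
    choose eM heM using h
    choose a ha using fun x : ℤ => aux_choose U (fun L => eM L x)
    apply hc a
    funext x
    show θ x (fun i' => a (x + N i')) = c0 x
    have hA : {L : ℕ | ∀ i' : Fin m, eM L (x + N i') = a (x + N i')} ∈ U := by
      have heq : {L : ℕ | ∀ i' : Fin m, eM L (x + N i') = a (x + N i')}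
          = ⋂ i' : Fin m, {L : ℕ | eM L (x + N i') = a (x + N i')} := by
        ext L; simp [Set.mem_iInter]
      rw [heq]
      exact Filter.iInter_mem.mpr fun i' => ha (x + N i')
    obtain ⟨L, hL1, hL2⟩ := Filter.nonempty_of_mem (Filter.inter_mem hA (hUtail x.natAbs))
    calc θ x (fun i' => a (x + N i'))
        = θ x (fun i' => eM L (x + N i')) := by
          congr 1; funext i'; exact (hL1 i').symm
      _ = c0 x := heM L x hL2
  obtain ⟨M₀, hM₀⟩ := horph
  -- Step 2 : wrapped (circular) rule distributions
  have circ : ∃ g : ℤ, ∀ M : ℕ, ∃ (T : ℤ) (θ' : ℤ → ((Fin m → S) → S)) (s : ℤ),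
      (2 * (M : ℤ) + 1 ≤ T) ∧ (∀ x, θ' (x + T) = θ' x) ∧
      (∀ x : ℤ, x.natAbs ≤ M → θ' x = θ x) ∧
      (∀ x : ℤ, s + r' + 1 ≤ x → x ≤ s + T + r' → θ' x = θ x) ∧
      (∃ k : ℤ, g = s + k * T) := by
    rcases hsub with hs | hs
    · refine ⟨i - 3 * (r' : ℤ) - 2, fun M => ?_⟩
      set n : ℕ := 2 * M + i.natAbs + j.natAbs + 2 * r' + 5 with hn
      obtain ⟨p, hp, hocc⟩ := hs n
      set T : ℤ := p - i + (n : ℤ) with hT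
      set B : ℤ := i - (n : ℤ) with hB
      have hTn : (n : ℤ) + 1 ≤ T := by omega
      have hocc' : ∀ k : ℕ, k < n → θ (B + T + k) = θ (B + k) := by
        intro k hk
        have h6 := hocc k hk
        rw [show B + T + (k : ℤ) = p + k by rw [hB, hT]; ring,
            show B + (k : ℤ) = i - (n : ℤ) + k by rw [hB]]
        exact h6
      obtain ⟨θ', hper, hJ⟩ := aux_wrap θ B T n hTn hocc'
      refine ⟨T, θ', i - 3 * (r' : ℤ) - 2, by omega, hper, ?_, ?_, ⟨0, by ring⟩⟩
      · intro x hx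
        exact hJ x (by omega) (by omega)
      · intro x hx1 hx2
        exact hJ x (by omega) (by omega)
    · refine ⟨j - (r' : ℤ), fun M => ?_⟩
      set n : ℕ := 2 * M + i.natAbs + j.natAbs + 2 * r' + 5 with hn
      obtain ⟨p, hp, hocc⟩ := hs n
      set T : ℤ := j + 1 - p with hT
      set B : ℤ := p with hB
      have hTn : (n : ℤ) + 1 ≤ T := by omega
      have hocc' : ∀ k : ℕ, k < n → θ (B + T + k) = θ (B + k) := by
        intro k hk
        have h6 := hocc k hk
        rw [show B + T + (k : ℤ) = j + 1 + k by rw [hB, hT]; ring,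
            show B + (k : ℤ) = p + k by rw [hB]]
        exact h6.symm
      obtain ⟨θ', hper, hJ⟩ := aux_wrap θ B T n hTn hocc'
      refine ⟨T, θ', j - (r' : ℤ) - T, by omega, hper, ?_, ?_, ⟨1, by ring⟩⟩
      · intro x hx
        exact hJ x (by omega) (by omega)
      · intro x hx1 hx2
        exact hJ x (by omega) (by omega)
  obtain ⟨g, hcirc⟩ := circ
  -- Step 3 : per-L non-injective pairs with pinned difference
  have key : ∀ L : ℕ, ∃ (e1 e2 : ℤ → S) (y : ℤ),
      g ≤ y ∧ y ≤ g + 2 * (r' : ℤ) ∧ e1 y ≠ e2 y ∧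
      ∀ x : ℤ, x.natAbs ≤ L →
        θ x (fun i' => e1 (x + N i')) = θ x (fun i' => e2 (x + N i')) := by
    intro L
    obtain ⟨T, θ', s, hT, hθper, hagree, hzone, k, hks⟩ := hcirc (M₀ + L)
    have hT0 : 0 < T := by omega
    haveI hFin : Finite {f : ℤ → S // ∀ x, f (x + T) = f x} := aux_finite_per hT0
    set F : {f : ℤ → S // ∀ x, f (x + T) = f x} → {f : ℤ → S // ∀ x, f (x + T) = f x} :=
      fun f => ⟨fun x => θ' x (fun i' => f.1 (x + N i')), by
        intro x
        show θ' (x + T) (fun i' => f.1 (x + T + N i')) = θ' x (fun i' => f.1 (x + N i'))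
        rw [hθper x]
        congr 1
        funext i'
        rw [show x + T + N i' = x + N i' + T by ring, f.2]⟩ with hF
    have hcper : ∀ x : ℤ, c0 (-(M₀ : ℤ) + (x + T + M₀) % T) = c0 (-(M₀ : ℤ) + (x + M₀) % T) := by
      intro x
      rw [show x + T + (M₀ : ℤ) = x + M₀ + T * 1 by ring, Int.add_mul_emod_self_left]
    set c' : {f : ℤ → S // ∀ x, f (x + T) = f x} :=
      ⟨fun x => c0 (-(M₀ : ℤ) + (x + M₀) % T), hcper⟩ with hc'
    have hnotsurj : ¬ ∃ e', F e' = c' := by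
      rintro ⟨e', he'⟩
      obtain ⟨x, hxM, hxne⟩ := hM₀ e'.1
      apply hxne
      calc θ x (fun i' => e'.1 (x + N i'))
          = θ' x (fun i' => e'.1 (x + N i')) := by rw [hagree x (by omega)]
        _ = c'.1 x := congrFun (congrArg Subtype.val he') x
        _ = c0 x := by
            show c0 (-(M₀ : ℤ) + (x + M₀) % T) = c0 x
            have hm : (x + (M₀ : ℤ)) % T = x + M₀ := Int.emod_eq_of_lt (by omega) (by omega)
            rw [hm, show -(M₀ : ℤ) + (x + M₀) = x by ring]
    have hnotinj : ¬ Function.Injective F := by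
      intro hFinj
      exact hnotsurj ⟨_, (Finite.injective_iff_surjective.mp hFinj c').choose_spec⟩
    rw [Function.Injective] at hnotinj
    push_neg at hnotinj
    obtain ⟨f1, f2, hFeq, hfne⟩ := hnotinj
    have himg : ∀ x, θ' x (fun i' => f1.1 (x + N i')) = θ' x (fun i' => f2.1 (x + N i')) :=
      fun x => congrFun (congrArg Subtype.val hFeq) x
    have hneF : ∃ y₀, f1.1 y₀ ≠ f2.1 y₀ := by
      by_contra hno
      push_neg at hno
      exact hfne (Subtype.ext (funext hno))
    by_cases hV : ∀ v : ℤ, g ≤ v → v ≤ g + 2 * (r' : ℤ) → f1.1 v = f2.1 v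
    · exfalso
      have hstretch : ∀ v : ℤ, s ≤ v → v ≤ s + 2 * (r' : ℤ) → f1.1 v = f2.1 v := by
        intro v h1 h2
        have h3 : g ≤ v + k * T := by rw [hks]; linarith
        have h4 : v + k * T ≤ g + 2 * (r' : ℤ) := by rw [hks]; linarith
        have h5 := hV (v + k * T) h3 h4
        have hv1 := aux_per f1.2 k v
        have hv2 := aux_per f2.2 k v
        rw [← hv1, ← hv2]
        exact h5
      have hsub2r : ∀ v : ℤ, s + T ≤ v → v ≤ s + T + 2 * (r' : ℤ) → f1.1 v = f2.1 v := by
        intro v h1 h2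
        have a1 := f1.2 (v - T)
        have a2 := f2.2 (v - T)
        rw [show v - T + T = v by ring] at a1 a2
        exact a1.trans ((hstretch (v - T) (by omega) (by omega)).trans a2.symm)
      set c2 : ℤ → S :=
        fun x => if s + r' + 1 ≤ x ∧ x ≤ s + T + r' then f2.1 x else f1.1 x with hc2
      have hC2E2 : ∀ v : ℤ, s ≤ v → v ≤ s + T + 2 * (r' : ℤ) → c2 v = f2.1 v := by
        intro v h1 h2
        show (if s + r' + 1 ≤ v ∧ v ≤ s + T + r' then f2.1 v else f1.1 v) = f2.1 v
        by_cases hin : s + r' + 1 ≤ v ∧ v ≤ s + T + r'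
        · rw [if_pos hin]
        · rw [if_neg hin]
          rw [not_and_or] at hin
          push_neg at hin
          rcases hin with hin | hin
          · exact hstretch v h1 (by omega)
          · exact hsub2r v (by omega) h2
      have hC2E1a : ∀ v : ℤ, v ≤ s + 2 * (r' : ℤ) → c2 v = f1.1 v := by
        intro v h1
        show (if s + r' + 1 ≤ v ∧ v ≤ s + T + r' then f2.1 v else f1.1 v) = f1.1 v
        by_cases hin : s + r' + 1 ≤ v ∧ v ≤ s + T + r'
        · rw [if_pos hin]
          exact (hstretch v (by omega) h1).symm
        · rw [if_neg hin]
      have hC2E1b : ∀ v : ℤ, s + T ≤ v → c2 v = f1.1 v := by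
        intro v h1
        show (if s + r' + 1 ≤ v ∧ v ≤ s + T + r' then f2.1 v else f1.1 v) = f1.1 v
        by_cases hin : s + r' + 1 ≤ v ∧ v ≤ s + T + r'
        · rw [if_pos hin]
          exact (hsub2r v h1 (by omega)).symm
        · rw [if_neg hin]
      have hHeq : ∀ x : ℤ, θ x (fun i' => c2 (x + N i')) = θ x (fun i' => f1.1 (x + N i')) := by
        intro x
        rcases le_or_gt x (s + r') with h | h
        · congr 1
          funext i'
          exact hC2E1a _ (by have := hrN i'; omega)
        rcases le_or_gt (s + T + r' + 1) x with h2 | h2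
        · congr 1
          funext i'
          exact hC2E1b _ (by have := hrN i'; omega)
        · calc θ x (fun i' => c2 (x + N i'))
              = θ x (fun i' => f2.1 (x + N i')) := by
                congr 1
                funext i'
                exact hC2E2 _ (by have := hrN i'; omega) (by have := hrN i'; omega)
            _ = θ x (fun i' => f1.1 (x + N i')) := by
                rw [← hzone x (by omega) (by omega)]
                exact (himg x).symm
      have hceq : c2 = f1.1 := hinj (funext hHeq)
      obtain ⟨y₀, hy₀⟩ := hneF
      set d : ℤ := s + r' + 1 - y₀ with hd
      set kk : ℤ := (d + T - 1) / T with hkk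
      have hdiv := Int.emod_add_mul_ediv (d + T - 1) T
      rw [← hkk] at hdiv
      have hm1 : 0 ≤ (d + T - 1) % T := Int.emod_nonneg _ (ne_of_gt hT0)
      have hm2 : (d + T - 1) % T < T := Int.emod_lt_of_pos _ hT0
      have hcomm : kk * T = T * kk := mul_comm _ _
      set y : ℤ := y₀ + kk * T with hy
      have hyl : s + r' + 1 ≤ y := by rw [hy, hcomm]; linarith
      have hyr : y ≤ s + T + r' := by rw [hy, hcomm]; linarith
      have hf1y := aux_per f1.2 kk y₀
      have hf2y := aux_per f2.2 kk y₀
      rw [← hy] at hf1y hf2y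
      have hc2y : c2 y = f2.1 y := by
        show (if s + r' + 1 ≤ y ∧ y ≤ s + T + r' then f2.1 y else f1.1 y) = f2.1 y
        rw [if_pos ⟨hyl, hyr⟩]
      rw [hceq] at hc2y
      exact hy₀ (by rw [← hf1y, ← hf2y]; exact hc2y)
    · push_neg at hV
      obtain ⟨y, hy1, hy2, hyne⟩ := hV
      refine ⟨f1.1, f2.1, y, hy1, hy2, hyne, fun x hx => ?_⟩
      rw [← hagree x (by omega)]
      exact himg x
  -- Step 4 : ultrafilter limit of the pairs contradicts injectivity
  choose E1 E2 Y hY1 hY2 hYne hEimg using key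
  choose a ha using fun x : ℤ => aux_choose U (fun L => E1 L x)
  choose b hb using fun x : ℤ => aux_choose U (fun L => E2 L x)
  have hab : (fun x => θ x fun i' => a (x + N i')) = (fun x => θ x fun i' => b (x + N i')) := by
    funext x
    have hA : {L : ℕ | ∀ i' : Fin m, E1 L (x + N i') = a (x + N i')} ∈ U := by
      have heq : {L : ℕ | ∀ i' : Fin m, E1 L (x + N i') = a (x + N i')}
          = ⋂ i' : Fin m, {L : ℕ | E1 L (x + N i') = a (x + N i')} := by
        ext L; simp [Set.mem_iInter]
      rw [heq]
      exact Filter.iInter_mem.mpr fun i' => ha (x + N i')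
    have hB : {L : ℕ | ∀ i' : Fin m, E2 L (x + N i') = b (x + N i')} ∈ U := by
      have heq : {L : ℕ | ∀ i' : Fin m, E2 L (x + N i') = b (x + N i')}
          = ⋂ i' : Fin m, {L : ℕ | E2 L (x + N i') = b (x + N i')} := by
        ext L; simp [Set.mem_iInter]
      rw [heq]
      exact Filter.iInter_mem.mpr fun i' => hb (x + N i')
    obtain ⟨L, ⟨hL1, hL2⟩, hL3⟩ :=
      Filter.nonempty_of_mem (Filter.inter_mem (Filter.inter_mem hA hB) (hUtail x.natAbs))
    calc θ x (fun i' => a (x + N i'))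
        = θ x (fun i' => E1 L (x + N i')) := by
          congr 1; funext i'; exact (hL1 i').symm
      _ = θ x (fun i' => E2 L (x + N i')) := hEimg L x hL3
      _ = θ x (fun i' => b (x + N i')) := by
          congr 1; funext i'; exact hL2 i'
  have habe : a = b := hinj hab
  haveI : Finite ↥(Set.Icc g (g + 2 * (r' : ℤ))) := (Set.finite_Icc _ _).to_subtype
  obtain ⟨v, hv⟩ := aux_choose U (fun L =>
    (⟨Y L, Set.mem_Icc.mpr ⟨hY1 L, hY2 L⟩⟩ : ↥(Set.Icc g (g + 2 * (r' : ℤ)))))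
  obtain ⟨L, ⟨hL1, hL2⟩, hL3⟩ :=
    Filter.nonempty_of_mem (Filter.inter_mem (Filter.inter_mem hv (ha v.1)) (hb v.1))
  have hYv : Y L = v.1 := congrArg Subtype.val hL1
  apply hYne L
  rw [hYv, hL2, hL3, habe]
end

section
/- Let θ ∈ R^ℤ be a rule distribution asymptotic to a recurrent rule distribution φ ∈ R^ℤ (i.e., θ and φ differ in only finitely many cells). Then the NUCA global update rule H_θ is surjunctive: if H_θ is injective, then H_θ is surjective. -/
lemma recurrent_large_shift {R : Type} {φ : ℤ → R} (hφ : Recurrent φ) (D : Finset ℤ) (B : ℕ) :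
    ∃ t : ℤ, B ≤ t.natAbs ∧ ∀ x ∈ D, φ (x + t) = φ x := by
  obtain ⟨t, ht0, hagr⟩ := hφ (Finset.image (fun pr : ℤ × ℤ => pr.1 + pr.2)
    (D ×ˢ Finset.Icc (-((B:ℤ)*B)) ((B:ℤ)*B)))
  have hagr' : ∀ x ∈ D, ∀ j : ℤ, -((B:ℤ)*B) ≤ j → j ≤ (B:ℤ)*B → φ (x + j + t) = φ (x + j) := by
    intro x hx j h1 h2
    exact hagr _ (Finset.mem_image.2 ⟨(x, j), Finset.mem_product.2
      ⟨hx, Finset.mem_Icc.2 ⟨h1, h2⟩⟩, rfl⟩)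
  by_cases hB : B ≤ t.natAbs
  · refine ⟨t, hB, fun x hx => ?_⟩
    have := hagr' x hx 0 (neg_nonpos.2 (by positivity)) (by positivity)
    simpa using this
  · push_neg at hB
    refine ⟨(B : ℤ) * t, ?_, ?_⟩
    · have ht1 : 1 ≤ t.natAbs := Int.natAbs_pos.2 ht0
      have h2 : ((B:ℤ) * t).natAbs = B * t.natAbs := by
        simp [Int.natAbs_mul]
      rw [h2]
      exact Nat.le_mul_of_pos_right _ ht1
    · intro x hx
      have key : ∀ j : ℕ, j ≤ B → φ (x + (j:ℤ) * t) = φ x := by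
        intro j hj
        induction j with
        | zero => simp
        | succ n ih =>
          have hn : n ≤ B := Nat.le_of_succ_le hj
          have hbound : |(n:ℤ) * t| ≤ (B:ℤ) * B := by
            rw [abs_mul]
            have h1 : |(n:ℤ)| ≤ (B:ℤ) := by
              simpa using Int.ofNat_le.2 hn
            have h2 : |t| ≤ (B:ℤ) := by
              rw [Int.abs_eq_natAbs]
              exact_mod_cast Nat.le_of_lt hB
            have := mul_le_mul h1 h2 (abs_nonneg t) (by positivity)
            exact this
          have := hagr' x hx ((n:ℤ)*t) (by linarith [abs_le.1 hbound]) (by linarith [abs_le.1 hbound])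
          calc φ (x + ((n:ℤ)+1) * t) = φ (x + (n:ℤ)*t + t) := by ring_nf
            _ = φ (x + (n:ℤ)*t) := this
            _ = φ x := ih hn
      have := key B le_rfl
      exact this

lemma exists_good_k (s L r : ℕ) (hs : 2 ≤ s) (hL : 1 ≤ L) :
    ∃ k : ℕ, s ^ (2*r) * (s ^ L - 1) ^ k < (s ^ L) ^ k := by
  have hq : 2 ≤ s ^ L := le_trans hs (Nat.le_self_pow (by omega) s)
  set q := s ^ L with hqdef
  have hq1 : (1:ℝ) ≤ (q:ℝ) - 1 := by
    have : (2:ℝ) ≤ (q:ℝ) := by exact_mod_cast hq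
    linarith
  have hy : (1:ℝ) < (q:ℝ) / ((q:ℝ) - 1) := by
    rw [lt_div_iff₀ (by linarith)]
    linarith
  obtain ⟨k, hk⟩ := pow_unbounded_of_one_lt ((s:ℝ) ^ (2*r)) hy
  refine ⟨k, ?_⟩
  have hpos : (0:ℝ) < ((q:ℝ) - 1) ^ k := by positivity
  have h2 : ((s:ℝ) ^ (2*r)) * ((q:ℝ) - 1) ^ k < (q:ℝ) ^ k := by
    rw [div_pow] at hk
    calc ((s:ℝ) ^ (2*r)) * ((q:ℝ) - 1) ^ k
        < ((q:ℝ) ^ k / ((q:ℝ) - 1) ^ k) * ((q:ℝ) - 1) ^ k := by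
          exact mul_lt_mul_of_pos_right hk hpos
      _ = (q:ℝ) ^ k := by field_simp
  have hcast : ((s ^ (2*r) * (q - 1) ^ k : ℕ) : ℝ) = ((s:ℝ) ^ (2*r)) * ((q:ℝ) - 1) ^ k := by
    push_cast [Nat.cast_sub (by omega : 1 ≤ q)]
    ring
  have : ((s ^ (2*r) * (q - 1) ^ k : ℕ) : ℝ) < ((q ^ k : ℕ) : ℝ) := by
    rw [hcast]; push_cast; exact h2
  exact_mod_cast this

lemma realize_of_finite {S : Type} [Fintype S] [Nonempty S] {m : ℕ} (N : Fin m → ℤ)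
    (ψ : ℤ → ((Fin m → S) → S)) (c : ℤ → S)
    (h : ∀ V : Finset ℤ, ∃ d : ℤ → S, ∀ x ∈ V, ψ x (fun i => d (x + N i)) = c x) :
    ∃ d : ℤ → S, (fun x => ψ x (fun i => d (x + N i))) = c := by
  letI : TopologicalSpace S := ⊥
  haveI : DiscreteTopology S := ⟨rfl⟩
  set H : (ℤ → S) → (ℤ → S) := fun d x => ψ x (fun i => d (x + N i)) with hHdef
  have hcont : Continuous H := by
    apply continuous_pi
    intro x
    exact (continuous_of_discreteTopology).comp
      (continuous_pi fun i => continuous_apply (x + N i))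
  have hclosed : IsClosed (Set.range H) := (isCompact_range hcont).isClosed
  by_contra hc
  push_neg at hc
  have hcr : c ∈ (Set.range H)ᶜ := by
    intro hmem
    obtain ⟨d, hd⟩ := hmem
    exact hc d hd
  obtain ⟨I, u, hu, hsub⟩ := (isOpen_pi_iff.1 hclosed.isOpen_compl) c hcr
  obtain ⟨d, hd⟩ := h I
  have : H d ∈ (I : Set ℤ).pi u := by
    intro i hi
    have : H d i = c i := hd i hi
    rw [this]
    exact (hu i hi).2
  exact (hsub this) ⟨d, rfl⟩

lemma preinj_transfer {S : Type} [Fintype S] [Nonempty S] {m : ℕ}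
    (N : Fin m → ℤ) (θ φ : ℤ → ((Fin m → S) → S))
    (hφ : Recurrent φ) (hasym : {x : ℤ | θ x ≠ φ x}.Finite)
    (hinj : Function.Injective (fun (c : ℤ → S) x => θ x (fun i => c (x + N i))))
    (d d' : ℤ → S) (hfin : ({x | d x ≠ d' x}).Finite)
    (heq : (fun x => φ x (fun i => d (x + N i))) = (fun x => φ x (fun i => d' (x + N i)))) :
    d = d' := by
  classical
  set F := hfin.toFinset with hF
  set D := Finset.image (fun pr : ℤ × Fin m => pr.1 - N pr.2) (F ×ˢ Finset.univ) with hD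
  set BD := D.sup Int.natAbs with hBD
  set A := hasym.toFinset with hA
  set BA := A.sup Int.natAbs with hBA
  obtain ⟨t, htB, hagr⟩ := recurrent_large_shift hφ D (BD + BA + 1)
  set sh : (ℤ → S) → (ℤ → S) := fun e y => e (y - t) with hsh
  have key : (fun (x : ℤ) => θ x (fun i => sh d (x + N i)))
      = (fun x => θ x (fun i => sh d' (x + N i))) := by
    funext x
    by_cases hcase : x - t ∈ D
    · have hxbig : BA < x.natAbs := by
        have h1 : (x - t).natAbs ≤ BD := Finset.le_sup hcase
        have h2 : t.natAbs ≤ (x - t).natAbs + x.natAbs := by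
          have h3 := Int.natAbs_sub_le x (x - t)
          simpa [Nat.add_comm] using h3
        omega
      have hθφ : θ x = φ x := by
        by_contra hne
        have hxA : x ∈ A := hasym.mem_toFinset.2 hne
        exact absurd (Finset.le_sup (f := Int.natAbs) hxA) (by omega)
      have hφsh : φ x = φ (x - t) := by
        have := hagr (x - t) hcase
        simpa using this
      have hco : ∀ e : ℤ → S, (fun i => sh e (x + N i)) = (fun i => e ((x - t) + N i)) := by
        intro e
        funext i
        show e (x + N i - t) = e ((x - t) + N i)
        ring_nf
      rw [hco, hco, hθφ, hφsh]
      exact congrFun heq (x - t)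
    · have hall : ∀ i, sh d (x + N i) = sh d' (x + N i) := by
        intro i
        show d (x + N i - t) = d' (x + N i - t)
        by_contra hne
        have hmem : x + N i - t ∈ F := hfin.mem_toFinset.2 hne
        exact hcase (by
          rw [hD]
          exact Finset.mem_image.2 ⟨(x + N i - t, i),
            Finset.mem_product.2 ⟨hmem, Finset.mem_univ _⟩, by ring⟩)
      simp only [funext hall]
  have hshd : sh d = sh d' := hinj key
  funext y
  have h4 := congrFun hshd (y + t)
  simpa [hsh] using h4

lemma goe_realize {S : Type} [Fintype S] [Nonempty S] {m : ℕ}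
    (N : Fin m → ℤ) (φ : ℤ → ((Fin m → S) → S)) (hφ : Recurrent φ)
    (hs : 2 ≤ Fintype.card S)
    (hpre : ∀ d d' : ℤ → S, ({x | d x ≠ d' x}).Finite →
      (fun x => φ x (fun i => d (x + N i))) = (fun x => φ x (fun i => d' (x + N i))) →
      d = d')
    (c : ℤ → S) (V : Finset ℤ) :
    ∃ d : ℤ → S, ∀ x ∈ V, φ x (fun i => d (x + N i)) = c x := by
  classical
  by_contra hcon
  push_neg at hcon
  -- hcon : ∀ d, ∃ x ∈ V, φ x (fun i => d (x + N i)) ≠ c x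
  set s := Fintype.card S with hsdef
  set r := Finset.univ.sup (fun i : Fin m => (N i).natAbs) with hrdef
  have hr : ∀ i, (N i).natAbs ≤ r := fun i => Finset.le_sup (f := fun i : Fin m => (N i).natAbs) (Finset.mem_univ i)
  set B₀ := V.sup Int.natAbs with hB₀
  have hVB : ∀ v ∈ V, v.natAbs ≤ B₀ := fun v hv => Finset.le_sup hv
  set I : Finset ℤ := Finset.Icc (-(B₀:ℤ)) (B₀:ℤ) with hI
  have hVI : V ⊆ I := by
    intro v hv
    have := hVB v hv
    rw [hI, Finset.mem_Icc]; omega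
  set L := I.card with hLdef
  have hLval : L = 2*B₀ + 1 := by
    rw [hLdef, hI, Int.card_Icc]; omega
  have hL1 : 1 ≤ L := by omega
  obtain ⟨k, hk⟩ := exists_good_k s L r hs hL1
  -- the shifts
  have hstep : ∀ z : ℕ, ∃ t' : ℤ, z + (2*B₀ + 1) ≤ t'.natAbs ∧ ∀ x ∈ I, φ (x + t') = φ x :=
    fun z => recurrent_large_shift hφ I (z + (2*B₀+1))
  choose f hf1 hf2 using hstep
  set t : ℕ → ℤ := fun n => Nat.rec (f 0) (fun _ prev => f prev.natAbs) n with htdef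
  have ht0 : t 0 = f 0 := rfl
  have htsucc : ∀ n, t (n+1) = f (t n).natAbs := fun n => rfl
  have hagrt : ∀ n, ∀ x ∈ I, φ (x + t n) = φ x := by
    intro n
    cases n with
    | zero => exact hf2 0
    | succ n => exact hf2 _
  have hmono : ∀ n, (t n).natAbs + (2*B₀+1) ≤ (t (n+1)).natAbs := by
    intro n
    rw [htsucc]
    exact hf1 _
  have hgap : ∀ i j, i < j → (t i).natAbs + (2*B₀+1) ≤ (t j).natAbs := by
    intro i j hij
    induction j with
    | zero => omega
    | succ n ih =>
      rcases Nat.lt_succ_iff_lt_or_eq.1 hij with h | h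
      · have := ih h
        have := hmono n
        omega
      · subst h; exact hmono i
  -- the big windows
  set T := (Finset.range k).sup (fun i => (t i).natAbs) with hT
  have htT : ∀ i, i < k → (t i).natAbs ≤ T := fun i hi =>
    Finset.le_sup (f := fun i => (t i).natAbs) (Finset.mem_range.2 hi)
  set nn := T + B₀ with hnn
  set Ωt : Finset ℤ := Finset.Icc (-(nn:ℤ)) (nn:ℤ) with hΩt
  set Ωp : Finset ℤ := Finset.Icc (-(nn:ℤ) - (r:ℤ)) ((nn:ℤ) + (r:ℤ)) with hΩp
  set W : ℕ → Finset ℤ := fun i => Finset.Icc (-(B₀:ℤ) + t i) ((B₀:ℤ) + t i) with hW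
  have hWsub : ∀ i ∈ Finset.range k, W i ⊆ Ωp := by
    intro i hi z hz
    rw [hW] at hz; rw [hΩp]
    rw [Finset.mem_Icc] at hz ⊢
    have := htT i (Finset.mem_range.1 hi)
    omega
  have hWdisj : ∀ i ∈ Finset.range k, ∀ j ∈ Finset.range k, i ≠ j → Disjoint (W i) (W j) := by
    intro i hi j hj hij
    rw [Finset.disjoint_left]
    intro z hzi hzj
    rw [hW, Finset.mem_Icc] at hzi hzj
    rcases Nat.lt_or_ge i j with h | h
    · have := hgap i j h; omega
    · have hji : j < i := by omega
      have := hgap j i hji; omega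
  -- configurations
  set s₀ : S := Classical.arbitrary S with hs₀
  set ext : (↥Ωt → S) → ℤ → S := fun p x => if h : x ∈ Ωt then p ⟨x, h⟩ else s₀ with hext
  set F : (↥Ωt → S) → (↥Ωp → S) :=
    fun p y => φ (y : ℤ) (fun i => ext p ((y : ℤ) + N i)) with hFdef
  have hFinj : Function.Injective F := by
    intro p p' hFeq
    have hHeq : (fun x => φ x (fun i => ext p (x + N i)))
        = (fun x => φ x (fun i => ext p' (x + N i))) := by
      funext x
      by_cases hx : x ∈ Ωp
      · exact congrFun hFeq ⟨x, hx⟩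
      · have hnb : ∀ i, ext p (x + N i) = ext p' (x + N i) := by
          intro i
          have hnot : x + N i ∉ Ωt := by
            intro hmem
            apply hx
            rw [hΩt, Finset.mem_Icc] at hmem
            rw [hΩp, Finset.mem_Icc]
            have := hr i
            omega
          rw [hext]
          simp only [dif_neg hnot]
        exact congrArg _ (funext hnb)
    have hdiff : ({x | ext p x ≠ ext p' x}).Finite := by
      apply Set.Finite.subset (Ωt.finite_toSet)
      intro x hx
      by_contra hnot
      have hnot' : x ∉ Ωt := fun h => hnot (Finset.mem_coe.2 h)
      apply hx
      rw [hext]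
      simp only [dif_neg hnot']
    have := hpre _ _ hdiff hHeq
    funext y
    have h2 := congrFun this (y : ℤ)
    rw [hext] at h2
    simpa [dif_pos y.2] using h2
  -- translated orphans
  have horpht : ∀ i, i < k → ∀ e : ℤ → S,
      ∃ x ∈ I, φ (x + t i) (fun j => e ((x + t i) + N j)) ≠ c x := by
    intro i hi e
    obtain ⟨x, hxV, hne⟩ := hcon (fun y => e (y + t i))
    refine ⟨x, hVI hxV, ?_⟩
    rw [hagrt i x (hVI hxV)]
    have : (fun j => e ((x + t i) + N j)) = (fun j => e ((x + N j) + t i)) := by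
      funext j; ring_nf
    rw [this]
    exact hne
  -- the counting injection
  set cI : ↥I → S := fun x => c x with hcI
  set Rest : Finset ℤ := Ωp \ (Finset.range k).biUnion W with hRest
  have hmemΩp : ∀ (x : ℤ), x ∈ I → ∀ i, i < k → x + t i ∈ Ωp := by
    intro x hx i hi
    rw [hI, Finset.mem_Icc] at hx
    rw [hΩp, Finset.mem_Icc]
    have := htT i hi
    omega
  set G : (↥Ωt → S) → (Fin k → {h : ↥I → S // h ≠ cI}) × (↥Rest → S) :=
    fun p => (fun i => ⟨fun x => F p ⟨(x : ℤ) + t i, hmemΩp x x.2 i i.2⟩, by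
      intro hcontra
      obtain ⟨x, hxI, hne⟩ := horpht i i.2 (ext p)
      apply hne
      have := congrFun hcontra ⟨x, hxI⟩
      exact this⟩,
     fun y => F p ⟨(y : ℤ), Finset.mem_sdiff.1 y.2 |>.1⟩) with hG
  have hGinj : Function.Injective G := by
    intro p p' hGeq
    apply hFinj
    funext z
    by_cases hzW : (z : ℤ) ∈ (Finset.range k).biUnion W
    · rw [Finset.mem_biUnion] at hzW
      obtain ⟨i, hik, hzWi⟩ := hzW
      have hik' : i < k := Finset.mem_range.1 hik
      have hxI : (z : ℤ) - t i ∈ I := by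
        rw [hW, Finset.mem_Icc] at hzWi
        rw [hI, Finset.mem_Icc]
        omega
      have hcomp := congrFun (congrArg Prod.fst hGeq) ⟨i, hik'⟩
      have hval := congrFun (congrArg Subtype.val hcomp) ⟨(z:ℤ) - t i, hxI⟩
      simp only [hG] at hval
      have hz1 : (⟨((z:ℤ) - t i) + t i, hmemΩp _ hxI i hik'⟩ : ↥Ωp) = z := by
        exact Subtype.ext (by ring)
      rwa [hz1] at hval
    · have hzR : (z : ℤ) ∈ Rest := Finset.mem_sdiff.2 ⟨z.2, hzW⟩
      have hcomp := congrFun (congrArg Prod.snd hGeq) ⟨(z : ℤ), hzR⟩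
      simpa using hcomp
  -- cardinalities
  have hcard := Fintype.card_le_of_injective G hGinj
  have hcard1 : Fintype.card (↥Ωt → S) = s ^ Ωt.card := by
    rw [Fintype.card_fun, Fintype.card_coe]
  have hcardsub : Fintype.card {h : ↥I → S // h ≠ cI} ≤ s ^ L - 1 := by
    have hlt : Fintype.card {h : ↥I → S // h ≠ cI} < Fintype.card (↥I → S) :=
      Fintype.card_subtype_lt (x := cI) (by simp)
    rw [Fintype.card_fun, Fintype.card_coe, ← hsdef, ← hLdef] at hlt
    omega
  have hcard2 : Fintype.card ((Fin k → {h : ↥I → S // h ≠ cI}) × (↥Rest → S))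
      ≤ (s ^ L - 1) ^ k * s ^ Rest.card := by
    rw [Fintype.card_prod, Fintype.card_fun, Fintype.card_fun, Fintype.card_coe,
      Fintype.card_fin]
    exact Nat.mul_le_mul_right _ (Nat.pow_le_pow_left hcardsub k)
  -- window cards
  have hWcard : ∀ i ∈ Finset.range k, (W i).card = L := by
    intro i hi
    rw [hW, Int.card_Icc, hLval]
    omega
  have hUcard : ((Finset.range k).biUnion W).card = k * L := by
    rw [Finset.card_biUnion hWdisj]
    rw [Finset.sum_congr rfl hWcard]
    simp [Finset.sum_const, Finset.card_range, Nat.mul_comm]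
  have hUsub : (Finset.range k).biUnion W ⊆ Ωp := Finset.biUnion_subset.2 hWsub
  have hkL : k * L ≤ Ωp.card := by
    rw [← hUcard]
    exact Finset.card_le_card hUsub
  have hRcard : Rest.card = Ωp.card - k * L := by
    rw [hRest, Finset.card_sdiff_of_subset hUsub, hUcard]
  have hΩtcard : Ωt.card = 2*nn + 1 := by
    rw [hΩt, Int.card_Icc]; omega
  have hΩpcard : Ωp.card = 2*nn + 2*r + 1 := by
    rw [hΩp, Int.card_Icc]; omega
  -- final contradiction
  have hchain : s ^ (2*nn+1) ≤ (s ^ L - 1) ^ k * s ^ (Ωp.card - k * L) := by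
    calc s ^ (2*nn+1) = Fintype.card (↥Ωt → S) := by rw [hcard1, hΩtcard]
      _ ≤ Fintype.card ((Fin k → {h : ↥I → S // h ≠ cI}) × (↥Rest → S)) := hcard
      _ ≤ (s ^ L - 1) ^ k * s ^ Rest.card := hcard2
      _ = (s ^ L - 1) ^ k * s ^ (Ωp.card - k * L) := by rw [hRcard]
  have hspos : 0 < s ^ (Ωp.card - k * L) := Nat.pow_pos (by omega)
  have h1 : s ^ (2*nn+1) * s ^ (2*r) ≤ ((s ^ L - 1) ^ k * s ^ (Ωp.card - k*L)) * s ^ (2*r) :=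
    Nat.mul_le_mul_right _ hchain
  have h2 : ((s ^ L - 1) ^ k * s ^ (Ωp.card - k*L)) * s ^ (2*r)
      = (s ^ (2*r) * (s ^ L - 1) ^ k) * s ^ (Ωp.card - k*L) := by ring
  have h3 : (s ^ (2*r) * (s ^ L - 1) ^ k) * s ^ (Ωp.card - k*L)
      < (s ^ L) ^ k * s ^ (Ωp.card - k*L) :=
    (Nat.mul_lt_mul_right hspos).2 hk
  have h4 : (s ^ L) ^ k * s ^ (Ωp.card - k*L) = s ^ Ωp.card := by
    rw [← pow_mul, ← pow_add]
    congr 1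
    rw [Nat.mul_comm]
    exact Nat.add_sub_cancel' hkL
  have h5 : s ^ (2*nn+1) * s ^ (2*r) = s ^ Ωp.card := by
    rw [← pow_add, hΩpcard]
    congr 1
    omega
  have final : s ^ Ωp.card < s ^ Ωp.card := by
    calc s ^ Ωp.card = s ^ (2*nn+1) * s ^ (2*r) := h5.symm
      _ ≤ ((s ^ L - 1) ^ k * s ^ (Ωp.card - k*L)) * s ^ (2*r) := h1
      _ = (s ^ (2*r) * (s ^ L - 1) ^ k) * s ^ (Ωp.card - k*L) := h2
      _ < (s ^ L) ^ k * s ^ (Ωp.card - k*L) := h3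
      _ = s ^ Ωp.card := h4
  exact lt_irrefl _ final

/-- if the rule distribution `θ` over ℤ is asymptotic to a recurrent
rule distribution `φ` (they differ in only finitely many cells), then the NUCA global
update rule `H_θ` is surjunctive: injectivity implies surjectivity. -/
theorem stmt_19 {S : Type} [Fintype S] [Nonempty S] {m : ℕ}
    (N : Fin m → ℤ) (θ φ : ℤ → ((Fin m → S) → S))
    (hφ : Recurrent φ) (hasym : {x : ℤ | θ x ≠ φ x}.Finite)
    (H : (ℤ → S) → (ℤ → S))
    (hH : H = fun c x => θ x (fun i => c (x + N i)))
    (hinj : Function.Injective H) :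
    Function.Surjective H := by
  classical
  subst hH
  by_cases hcard : Fintype.card S ≤ 1
  · haveI : Subsingleton S := Fintype.card_le_one_iff_subsingleton.1 hcard
    intro c
    exact ⟨c, funext fun x => Subsingleton.elim _ _⟩
  · have hs : 2 ≤ Fintype.card S := by omega
    have hpre : ∀ d d' : ℤ → S, ({x | d x ≠ d' x}).Finite →
        (fun x => φ x (fun i => d (x + N i))) = (fun x => φ x (fun i => d' (x + N i))) →
        d = d' := fun d d' h1 h2 => preinj_transfer N θ φ hφ hasym hinj d d' h1 h2
    intro c
    set A := hasym.toFinset with hA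
    have hθφ : ∀ x, x ∉ A → θ x = φ x := by
      intro x hx
      by_contra hne
      exact hx (hasym.mem_toFinset.2 hne)
    have hφsurj : ∀ c' : ℤ → S, ∃ d : ℤ → S, (fun x => φ x (fun i => d (x + N i))) = c' := by
      intro c'
      apply realize_of_finite N φ c'
      intro V
      exact goe_realize N φ hφ hs hpre c' V
    choose pre hpreimg using hφsurj
    set cp : (↥A → S) → ℤ → S := fun p x => if h : x ∈ A then p ⟨x, h⟩ else c x with hcp
    set d' : (↥A → S) → ℤ → S := fun p => pre (cp p) with hd'def
    have hd' : ∀ p, (fun x => φ x (fun i => d' p (x + N i))) = cp p := fun p => hpreimg (cp p)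
    have hoffA : ∀ p x, x ∉ A → θ x (fun i => d' p (x + N i)) = c x := by
      intro p x hx
      rw [hθφ x hx]
      have h2 := congrFun (hd' p) x
      rw [h2, hcp]
      simp only [dif_neg hx]
    set τ : (↥A → S) → (↥A → S) := fun p a => θ (a:ℤ) (fun i => d' p ((a:ℤ) + N i)) with hτ
    have hτinj : Function.Injective τ := by
      intro p p' he
      have hHeq : (fun x => θ x (fun i => d' p (x + N i)))
          = (fun x => θ x (fun i => d' p' (x + N i))) := by
        funext x
        by_cases hx : x ∈ A
        · exact congrFun he ⟨x, hx⟩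
        · rw [hoffA p x hx, hoffA p' x hx]
      have hdd : d' p = d' p' := hinj hHeq
      have hcpeq : cp p = cp p' := by rw [← hd' p, ← hd' p', hdd]
      funext a
      have h2 := congrFun hcpeq (a:ℤ)
      rw [hcp] at h2
      simpa [dif_pos a.2] using h2
    have hτsurj : Function.Surjective τ := Finite.surjective_of_injective hτinj
    obtain ⟨p, hp⟩ := hτsurj (fun a => c (a:ℤ))
    refine ⟨d' p, ?_⟩
    funext x
    by_cases hx : x ∈ A
    · exact congrFun hp ⟨x, hx⟩
    · exact hoffA p x hx
end
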